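/- arXiv:2501.04166 — 8 statements merged into one kernel-verified Lean document; each statement's English description precedes it below -/
import Mathlib

section
/- Let H be a bipartite graph with sides A = {u₁,…,u_a} and B = {v₁,…,v_b} (every edge of H has one endpoint in A and one in B). Let G be the rook graph on vertex set {1,…,a+1} × {1,…,b+1}. Define A' = {(i, b+1) : 1 ≤ i ≤ a}, B' = {(a+1, j) : 1 ≤ j ≤ b}, and F = {(i,j) : 1 ≤ i ≤ a, 1 ≤ j ≤ b, and u_i v_j is an edge of H}. Let H' be the graph on vertex set A' ∪ B' in which two vertices x, y are adjacent if and only if one of them lies in A', the other lies in B', and there exists z ∈ F adjacent in G to both x and y. Then H' is isomorphic to H via the map sending (i, b+1) to u_i and (a+1, j) to v_j. -/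
/-- The rook graph on `{1,…,a} × {1,…,b}`: two distinct vertices are adjacent iff they
agree in the first or in the second coordinate. -/
def rookGraph (a b : ℕ) : SimpleGraph (Fin a × Fin b) :=
  SimpleGraph.fromRel (fun u v => u.1 = v.1 ∨ u.2 = v.2)

/-- The set `A' = {(i, b+1) : 1 ≤ i ≤ a}` in the rook graph on `{1,…,a+1} × {1,…,b+1}`. -/
def setA' (a b : ℕ) : Set (Fin (a + 1) × Fin (b + 1)) :=
  {p | ∃ i : Fin a, p = (i.castSucc, Fin.last b)}

/-- The set `B' = {(a+1, j) : 1 ≤ j ≤ b}`. -/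
def setB' (a b : ℕ) : Set (Fin (a + 1) × Fin (b + 1)) :=
  {p | ∃ j : Fin b, p = (Fin.last a, j.castSucc)}

/-- The set `F` encoding the adjacency matrix of the bipartite graph `H`
(with sides indexed by `Fin a` and `Fin b`). -/
def setF (a b : ℕ) (H : SimpleGraph (Fin a ⊕ Fin b)) : Set (Fin (a + 1) × Fin (b + 1)) :=
  {p | ∃ (i : Fin a) (j : Fin b), p = (i.castSucc, j.castSucc) ∧ H.Adj (Sum.inl i) (Sum.inr j)}

/-- The graph `H'`: two vertices are adjacent iff one lies in `A'`, the other in `B'`,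
and some `z ∈ F` is adjacent in the rook graph to both of them. -/
def graphH' (a b : ℕ) (H : SimpleGraph (Fin a ⊕ Fin b)) :
    SimpleGraph (Fin (a + 1) × Fin (b + 1)) :=
  SimpleGraph.fromRel (fun x y => x ∈ setA' a b ∧ y ∈ setB' a b ∧
    ∃ z ∈ setF a b H, (rookGraph (a + 1) (b + 1)).Adj z x ∧ (rookGraph (a + 1) (b + 1)).Adj z y)

/-- The map sending `u_i` (left side of `H`) to `(i, b+1)` and `v_j` (right side)
to `(a+1, j)`. -/
def theMap (a b : ℕ) : Fin a ⊕ Fin b → Fin (a + 1) × Fin (b + 1) :=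
  Sum.elim (fun i => (i.castSucc, Fin.last b)) (fun j => (Fin.last a, j.castSucc))

/-- `H'` (restricted to `A' ∪ B'`, which is the range of the map) is isomorphic to the
bipartite graph `H`, via the map sending `(i, b+1)` to `u_i` and `(a+1, j)` to `v_j`. -/
theorem rook_encodes_bipartite (a b : ℕ) (H : SimpleGraph (Fin a ⊕ Fin b))
    (hbip : ∀ x y, H.Adj x y →
      (x.isLeft ∧ y.isRight) ∨ (x.isRight ∧ y.isLeft)) :
    Function.Injective (theMap a b) ∧
    Set.range (theMap a b) = setA' a b ∪ setB' a b ∧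
    (∀ x y : Fin a ⊕ Fin b, H.Adj x y ↔ (graphH' a b H).Adj (theMap a b x) (theMap a b y)) := by
  have hcl : ∀ (i : Fin a), i.castSucc ≠ Fin.last a := fun i => (Fin.castSucc_lt_last i).ne
  have hclb : ∀ (j : Fin b), j.castSucc ≠ Fin.last b := fun j => (Fin.castSucc_lt_last j).ne
  -- the key forward lemma
  have fwd : ∀ (i : Fin a) (j : Fin b), H.Adj (Sum.inl i) (Sum.inr j) →
      (graphH' a b H).Adj (i.castSucc, Fin.last b) (Fin.last a, j.castSucc) := by
    intro i j hij
    refine ⟨?_, Or.inl ⟨⟨i, rfl⟩, ⟨j, rfl⟩, (i.castSucc, j.castSucc), ⟨i, j, rfl, hij⟩, ?_, ?_⟩⟩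
    · intro h
      exact hcl i (congrArg Prod.fst h)
    · exact ⟨fun h => hclb j (congrArg Prod.snd h), Or.inl (Or.inl rfl)⟩
    · exact ⟨fun h => hcl i (congrArg Prod.fst h), Or.inl (Or.inr rfl)⟩
  -- the key backward lemma: if some z ∈ F is rook-adjacent to (i', last b) and (last a, j')
  have bwd : ∀ (i' : Fin a) (j' : Fin b),
      (∃ z ∈ setF a b H, (rookGraph (a + 1) (b + 1)).Adj z (i'.castSucc, Fin.last b) ∧
        (rookGraph (a + 1) (b + 1)).Adj z (Fin.last a, j'.castSucc)) →
      H.Adj (Sum.inl i') (Sum.inr j') := by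
    rintro i' j' ⟨z, ⟨i, j, rfl, hij⟩, ⟨_, h1⟩, ⟨_, h2⟩⟩
    have hi : i = i' := by
      rcases h1 with (h | h) | (h | h)
      · exact Fin.castSucc_injective a h
      · exact absurd h (hclb j)
      · exact Fin.castSucc_injective a h.symm
      · exact absurd h.symm (hclb j)
    have hj : j = j' := by
      rcases h2 with (h | h) | (h | h)
      · exact absurd h (hcl i)
      · exact Fin.castSucc_injective b h
      · exact absurd h.symm (hcl i)
      · exact Fin.castSucc_injective b h.symm
    rw [← hi, ← hj]; exact hij
  refine ⟨?_, ?_, ?_⟩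
  · rintro (i | j) (i' | j') h <;> simp only [theMap, Sum.elim_inl, Sum.elim_inr, Prod.mk.injEq] at h
    · rw [Fin.castSucc_injective a h.1]
    · exact absurd h.1 (hcl i)
    · exact absurd h.1.symm (hcl i')
    · rw [Fin.castSucc_injective b h.2]
  · ext p
    constructor
    · rintro ⟨(i | j), rfl⟩
      · exact Or.inl ⟨i, rfl⟩
      · exact Or.inr ⟨j, rfl⟩
    · rintro (⟨i, rfl⟩ | ⟨j, rfl⟩)
      · exact ⟨Sum.inl i, rfl⟩
      · exact ⟨Sum.inr j, rfl⟩
  · intro x y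
    constructor
    · intro hxy
      rcases hbip x y hxy with ⟨hx, hy⟩ | ⟨hx, hy⟩
      · obtain ⟨i, rfl⟩ := Sum.isLeft_iff.mp hx
        obtain ⟨j, rfl⟩ := Sum.isRight_iff.mp hy
        exact fwd i j hxy
      · obtain ⟨j, rfl⟩ := Sum.isRight_iff.mp hx
        obtain ⟨i, rfl⟩ := Sum.isLeft_iff.mp hy
        exact ((fwd i j hxy.symm)).symm
    · rintro ⟨hne, h | h⟩
      · obtain ⟨⟨i', hA⟩, ⟨j', hB⟩, hz⟩ := h
        rcases x with i | j
        · rcases y with i2 | j2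
          · exfalso
            simp only [theMap, Sum.elim_inl, Prod.mk.injEq] at hB
            exact hcl i2 hB.1
          · exact bwd i j2 hz
        · exfalso
          simp only [theMap, Sum.elim_inr, Prod.mk.injEq] at hA
          exact (hcl i').symm hA.1
      · obtain ⟨⟨i', hA⟩, ⟨j', hB⟩, hz⟩ := h
        rcases y with i | j
        · rcases x with i2 | j2
          · exfalso
            simp only [theMap, Sum.elim_inl, Prod.mk.injEq] at hB
            exact hcl i2 hB.1
          · exact (bwd i j2 hz).symm
        · exfalso
          simp only [theMap, Sum.elim_inr, Prod.mk.injEq] at hA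
          exact (hcl i').symm hA.1
end

section
/- For every finite simple graph G, the treedepth td(G) equals the minimum number k ∈ ℕ such that Splitter wins the radius-∞ Splitter Game on G within k rounds. -/
/-- An elimination forest of a graph `G`, encoded by its ancestor (partial) order on `V(G)`:
`le u v` means "`u` is an ancestor of `v` (or `u = v`)". The set of ancestors of any vertex
is a chain (this makes the order a rooted forest), and for every edge `uv` of `G` one of
`u`, `v` is an ancestor of the other. -/
structure ElimForest {V : Type} (G : SimpleGraph V) where
  le : V → V → Prop
  le_refl : ∀ v, le v v
  le_trans : ∀ u v w, le u v → le v w → le u w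
  le_antisymm : ∀ u v, le u v → le v u → u = v
  ancestors_chain : ∀ v u w, le u v → le w v → le u w ∨ le w u
  adj_comparable : ∀ u v, G.Adj u v → le u v ∨ le v u

/-- The depth of an elimination forest: the maximum number of vertices on a root-to-leaf
path, i.e. the maximum number of ancestors (including itself) of a vertex. -/
noncomputable def ElimForest.depth {V : Type} {G : SimpleGraph V} (F : ElimForest G) : ℕ :=
  ⨆ v : V, Set.ncard {u | F.le u v}

/-- The treedepth of `G`: the minimum depth of an elimination forest of `G`. -/
noncomputable def treedepth {V : Type} (G : SimpleGraph V) : ℕ :=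
  sInf {d | ∃ F : ElimForest G, F.depth = d}

/-- `SplitterWins k V G`: Splitter wins the radius-∞ Splitter Game on `G` within `k` rounds.
Within `0` rounds Splitter wins iff `G` has no vertices; within `k+1` rounds he wins iff for
every connected component `C` (chosen by Connector) there is a vertex `v` of `C` whose
deletion leaves a graph on which Splitter wins within `k` rounds. -/
def SplitterWins : ℕ → (V : Type) → SimpleGraph V → Prop
  | 0, V, _ => IsEmpty V
  | k + 1, V, G => ∀ C : G.ConnectedComponent, ∃ v : V, v ∈ C.supp ∧
      SplitterWins k (↥(C.supp \ {v})) (G.induce (C.supp \ {v}))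

/-!
An elimination forest of depth `k` is a winning strategy for Splitter: in a connected component
a vertex with fewest ancestors is an ancestor of the whole component (every edge leaving its
subtree would have to reach a proper ancestor of it), so Splitter deletes it and the forest
restricted to the rest of the component has depth at most `k - 1`. Conversely, from a strategy
winning in `k` rounds we build a forest of depth at most `k` by induction: in each component
the vertex Splitter deletes becomes the root, with the forests for the remainders below it.
-/

lemma Nat.sInf_range_eq_sInf_setOf_exists_le {ι : Type*} (f : ι → ℕ) :
    sInf (Set.range f) = sInf {k | ∃ i, f i ≤ k} := by
  cases isEmpty_or_nonempty ι
  · simp [*]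
  apply le_antisymm
  · have hne : {k | ∃ i, f i ≤ k}.Nonempty := ⟨_, Classical.arbitrary ι, le_rfl⟩
    obtain ⟨i, hi⟩ := Nat.sInf_mem hne
    exact (Nat.sInf_le (Set.mem_range_self i)).trans hi
  · obtain ⟨i, hi⟩ := Nat.sInf_mem (Set.range_nonempty f)
    exact hi ▸ Nat.sInf_le ⟨i, le_rfl⟩

open SimpleGraph

namespace ElimForest

variable {V : Type} {G : SimpleGraph V} (F : ElimForest G)

def ancestors (v : V) : Set V := {u | F.le u v}

lemma mem_ancestors_self (v : V) : v ∈ F.ancestors v := F.le_refl v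

lemma depth_le {k : ℕ} (h : ∀ v, (F.ancestors v).ncard ≤ k) : F.depth ≤ k := by
  cases isEmpty_or_nonempty V
  · simp [depth]
  · exact ciSup_le h

/-- Walking along edges cannot leave the subtree of `v` without passing through a proper
ancestor of `v`. -/
lemma le_of_reachable {v : V} (hmin : ∀ u, G.Reachable v u → F.le u v → u = v) {u : V}
    (hvu : G.Reachable v u) : F.le v u := by
  induction (reachable_iff_reflTransGen v u).1 hvu with
  | refl => exact F.le_refl v
  | @tail a b hva hab ih =>
    have hva : G.Reachable v a := (reachable_iff_reflTransGen v a).2 hva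
    rcases F.adj_comparable a b hab with hab | hba
    · exact F.le_trans _ _ _ (ih hva) hab
    · rcases F.ancestors_chain a v b (ih hva) hba with hvb | hbv
      · exact hvb
      · rw [hmin b (hva.trans hab.reachable) hbv]
        exact F.le_refl v

def induce (s : Set V) : ElimForest (G.induce s) where
  le a b := F.le a b
  le_refl a := F.le_refl a
  le_trans a b c := F.le_trans a b c
  le_antisymm a b hab hba := Subtype.ext (F.le_antisymm a b hab hba)
  ancestors_chain a b c := F.ancestors_chain a b c
  adj_comparable a b := F.adj_comparable a b

lemma ncard_ancestors_induce {s : Set V} (b : s) :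
    ((F.induce s).ancestors b).ncard = (F.ancestors b ∩ s).ncard := by
  rw [← Set.ncard_image_of_injective _ Subtype.val_injective]
  congr 1
  ext u
  exact ⟨fun ⟨a, ha, hau⟩ => hau ▸ ⟨ha, a.2⟩, fun ⟨hu, hus⟩ => ⟨⟨u, hus⟩, hu, rfl⟩⟩

variable [Finite V]

lemma ncard_ancestors_le_depth (v : V) : (F.ancestors v).ncard ≤ F.depth :=
  le_ciSup (f := fun v => (F.ancestors v).ncard) (Set.finite_range _).bddAbove v

lemma isEmpty_of_depth_eq_zero (h : F.depth = 0) : IsEmpty V :=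
  ⟨fun v => by
    have := F.ncard_ancestors_le_depth v
    have := (Set.ncard_pos (Set.toFinite _)).2 ⟨v, F.mem_ancestors_self v⟩
    omega⟩

lemma ncard_ancestors_lt {u v : V} (huv : F.le u v) (hne : u ≠ v) :
    (F.ancestors u).ncard < (F.ancestors v).ncard :=
  Set.ncard_lt_ncard
    ⟨fun _ hw => F.le_trans _ _ _ hw huv,
      fun hsub => hne (F.le_antisymm _ _ huv (hsub (F.mem_ancestors_self v)))⟩
    (Set.toFinite _)

lemma exists_mem_supp_forall_le (C : G.ConnectedComponent) :
    ∃ v ∈ C.supp, ∀ u ∈ C.supp, F.le v u := by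
  obtain ⟨v, hv, hmin⟩ := Set.exists_min_image C.supp (fun u => (F.ancestors u).ncard)
    (Set.toFinite _) C.nonempty_supp
  have hsupp {u : V} (hvu : G.Reachable v u) : u ∈ C.supp :=
    (C.mem_supp_iff u).2 ((ConnectedComponent.sound hvu).symm.trans hv)
  refine ⟨v, hv, fun u hu => F.le_of_reachable (fun w hvw hwv => ?_)
    (C.reachable_of_mem_supp hv hu)⟩
  by_contra hne
  exact (hmin w (hsupp hvw)).not_gt (F.ncard_ancestors_lt hwv hne)

lemma depth_induce_le_depth_sub_one {s : Set V} (h : ∀ b ∈ s, ∃ v ∉ s, F.le v b) :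
    (F.induce s).depth ≤ F.depth - 1 := by
  refine depth_le _ fun b => ?_
  obtain ⟨v, hvs, hvb⟩ := h b b.2
  calc ((F.induce s).ancestors b).ncard = (F.ancestors b ∩ s).ncard := F.ncard_ancestors_induce b
    _ ≤ (F.ancestors b \ {v}).ncard :=
        Set.ncard_le_ncard (fun u hu => ⟨hu.1, fun huv => hvs (huv ▸ hu.2)⟩) (Set.toFinite _)
    _ = (F.ancestors b).ncard - 1 := Set.ncard_sdiff_singleton_of_mem hvb
    _ ≤ F.depth - 1 := Nat.sub_le_sub_right (F.ncard_ancestors_le_depth b) 1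

end ElimForest

theorem splitterWins_of_depth_le {k : ℕ} {V : Type} [Finite V] {G : SimpleGraph V}
    (F : ElimForest G) (hF : F.depth ≤ k) : SplitterWins k V G := by
  induction k generalizing V with
  | zero => exact F.isEmpty_of_depth_eq_zero (Nat.le_zero.1 hF)
  | succ k ih =>
    intro C
    obtain ⟨v, hv, hvC⟩ := F.exists_mem_supp_forall_le C
    refine ⟨v, hv, ih (F.induce (C.supp \ {v})) ?_⟩
    have := F.depth_induce_le_depth_sub_one (s := C.supp \ {v}) fun b hb =>
      ⟨v, Set.notMem_sdiff_of_mem rfl, hvC b (Set.mem_of_mem_sdiff hb)⟩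
    omega

namespace ElimForest

section OfRoots

variable {V : Type} {G : SimpleGraph V} (r : G.ConnectedComponent → V)
  (F : ∀ C : G.ConnectedComponent, ElimForest (G.induce (C.supp \ {r C})))

def LeBelowRoot (C : G.ConnectedComponent) (a b : V) : Prop :=
  ∃ (ha : a ∈ C.supp \ {r C}) (hb : b ∈ C.supp \ {r C}), (F C).le ⟨a, ha⟩ ⟨b, hb⟩

/-- Each component `C` becomes a tree rooted at `r C` with `F C` hanging below the root. -/
def ofRoots : ElimForest G where
  le a b := G.connectedComponentMk a = G.connectedComponentMk b ∧
    (a = r (G.connectedComponentMk b) ∨ LeBelowRoot r F (G.connectedComponentMk b) a b)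
  le_refl b := by
    refine ⟨rfl, or_iff_not_imp_left.2 fun hb => ?_⟩
    have hb' : b ∈ (G.connectedComponentMk b).supp \ {r (G.connectedComponentMk b)} :=
      ⟨rfl, hb⟩
    exact ⟨hb', hb', (F _).le_refl _⟩
  le_trans a b c := by
    rintro ⟨hab, hab'⟩ ⟨hbc, hbc'⟩
    rw [hbc] at hab hab'
    refine ⟨hab, ?_⟩
    rcases hab' with ha | ⟨ha, hb, hab'⟩
    · exact Or.inl ha
    rcases hbc' with hb' | ⟨_, hc, hbc'⟩
    · exact absurd hb' hb.2
    · exact Or.inr ⟨ha, hc, (F _).le_trans _ _ _ hab' hbc'⟩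
  le_antisymm a b := by
    rintro ⟨hab, hab'⟩ ⟨-, hba'⟩
    rw [hab] at hba'
    rcases hab' with ha | ⟨ha, hb, hab'⟩ <;> rcases hba' with hb' | ⟨hb', ha', hba'⟩
    · exact ha.trans hb'.symm
    · exact absurd ha ha'.2
    · exact absurd hb' hb.2
    · exact congrArg Subtype.val ((F _).le_antisymm _ _ hab' hba')
  ancestors_chain x u w := by
    rintro ⟨hux, hu⟩ ⟨hwx, hw⟩
    rw [hux, hwx]
    rcases hu with hu | ⟨hu, _, hux'⟩
    · exact Or.inl ⟨rfl, Or.inl hu⟩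
    rcases hw with hw | ⟨hw, _, hwx'⟩
    · exact Or.inr ⟨rfl, Or.inl hw⟩
    rcases (F _).ancestors_chain _ _ _ hux' hwx' with huw | hwu
    · exact Or.inl ⟨rfl, Or.inr ⟨hu, hw, huw⟩⟩
    · exact Or.inr ⟨rfl, Or.inr ⟨hw, hu, hwu⟩⟩
  adj_comparable u w hadj := by
    have huw : G.connectedComponentMk u = G.connectedComponentMk w :=
      ConnectedComponent.sound hadj.reachable
    rw [huw]
    by_cases hu : u = r (G.connectedComponentMk w)
    · exact Or.inl ⟨rfl, Or.inl hu⟩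
    by_cases hw : w = r (G.connectedComponentMk w)
    · exact Or.inr ⟨rfl, Or.inl hw⟩
    have hu' : u ∈ (G.connectedComponentMk w).supp \ {r (G.connectedComponentMk w)} := ⟨huw, hu⟩
    have hw' : w ∈ (G.connectedComponentMk w).supp \ {r (G.connectedComponentMk w)} := ⟨rfl, hw⟩
    rcases (F _).adj_comparable ⟨u, hu'⟩ ⟨w, hw'⟩ hadj with huw | hwu
    · exact Or.inl ⟨rfl, Or.inr ⟨hu', hw', huw⟩⟩
    · exact Or.inr ⟨rfl, Or.inr ⟨hw', hu', hwu⟩⟩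

lemma ancestors_ofRoots_subset (x : V) : (ofRoots r F).ancestors x ⊆
    insert (r (G.connectedComponentMk x)) {a | LeBelowRoot r F (G.connectedComponentMk x) a x} :=
  fun _ ha => ha.2

variable [Finite V]

lemma ncard_setOf_leBelowRoot_le (C : G.ConnectedComponent) (x : V) :
    {a | LeBelowRoot r F C a x}.ncard ≤ (F C).depth := by
  by_cases hx : x ∈ C.supp \ {r C}
  · have : {a | LeBelowRoot r F C a x} = Subtype.val '' (F C).ancestors ⟨x, hx⟩ := by
      ext a
      exact ⟨fun ⟨ha, _, hax⟩ => ⟨⟨a, ha⟩, hax, rfl⟩, fun ⟨a', hax, ha'⟩ => ha' ▸ ⟨a'.2, hx, hax⟩⟩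
    rw [this, Set.ncard_image_of_injective _ Subtype.val_injective]
    exact (F C).ncard_ancestors_le_depth _
  · have : {a | LeBelowRoot r F C a x} = ∅ :=
      Set.eq_empty_of_forall_notMem fun _ ⟨_, hx', _⟩ => hx hx'
    simp [this]

lemma depth_ofRoots_le {k : ℕ} (hF : ∀ C, (F C).depth ≤ k) : (ofRoots r F).depth ≤ k + 1 :=
  depth_le _ fun x => calc
    ((ofRoots r F).ancestors x).ncard
        ≤ (insert (r _) {a | LeBelowRoot r F (G.connectedComponentMk x) a x}).ncard :=
      Set.ncard_le_ncard (ancestors_ofRoots_subset r F x) (Set.toFinite _)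
    _ ≤ {a | LeBelowRoot r F (G.connectedComponentMk x) a x}.ncard + 1 := Set.ncard_insert_le _ _
    _ ≤ k + 1 := by grw [ncard_setOf_leBelowRoot_le, hF]

end OfRoots

end ElimForest

theorem exists_depth_le_of_splitterWins {k : ℕ} {V : Type} [Finite V] {G : SimpleGraph V}
    (h : SplitterWins k V G) : ∃ F : ElimForest G, F.depth ≤ k := by
  induction k generalizing V with
  | zero =>
    have : IsEmpty V := h
    let F : ElimForest G :=
      { le _ _ := True
        le_refl := isEmptyElim
        le_trans := isEmptyElim
        le_antisymm := isEmptyElim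
        ancestors_chain := isEmptyElim
        adj_comparable := isEmptyElim }
    exact ⟨F, F.depth_le isEmptyElim⟩
  | succ k ih =>
    choose r _ hr using h
    choose F hF using fun C => ih (hr C)
    exact ⟨.ofRoots r F, ElimForest.depth_ofRoots_le r F hF⟩

theorem splitterWins_iff_exists_depth_le {k : ℕ} {V : Type} [Finite V] {G : SimpleGraph V} :
    SplitterWins k V G ↔ ∃ F : ElimForest G, F.depth ≤ k :=
  ⟨exists_depth_le_of_splitterWins, fun ⟨F, hF⟩ => splitterWins_of_depth_le F hF⟩

/-- Treedepth equals the minimum number of rounds Splitter needs to win the radius-∞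
Splitter Game. -/
theorem treedepth_eq_splitter {V : Type} [Finite V] (G : SimpleGraph V) :
    treedepth G = sInf {k | SplitterWins k V G} := by
  simp only [splitterWins_iff_exists_depth_le]
  exact Nat.sInf_range_eq_sInf_setOf_exists_le _
end

section
/- Let G be a finite simple graph admitting a tree-model of depth at most d that uses a label set of size at most m. Then G has a vertex ordering of diversity at most dm; in particular, the linear modular-width of G is at most dm. Concretely, any ordering of V(G) according to a pre-order traversal of the tree of the tree-model (restricted to the leaves) has diversity at most dm. -/
/-- `t` is a lowest common ancestor of `x` and `y` in the ancestor order `le`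
(`le a b` meaning "`a` is an ancestor of `b` or `a = b`"). -/
def IsLCA {N : Type} (le : N → N → Prop) (x y t : N) : Prop :=
  le t x ∧ le t y ∧ ∀ s, le s x → le s y → le s t

/-- A tree-model of a graph `G`: a finite label set `Λ`, a finite rooted tree with node set
`N` (encoded by its ancestor order `le`, whose down-sets are chains and which has a least
element, the root), whose set of leaves equals `V(G)` (via the injection `leaf`), a labelling
`lab : V(G) → Λ`, and a symmetric function `M t : Λ × Λ → Bool` for each node `t`, such that
distinct vertices `u, v` are adjacent in `G` iff `M t (lab u) (lab v) = true` where `t` is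
the lowest common ancestor of the leaves `u` and `v`. -/
structure TreeModel {V : Type} (G : SimpleGraph V) where
  Λ : Type
  N : Type
  finΛ : Finite Λ
  finN : Finite N
  le : N → N → Prop
  le_refl : ∀ x, le x x
  le_trans : ∀ x y z, le x y → le y z → le x z
  le_antisymm : ∀ x y, le x y → le y x → x = y
  ancestors_chain : ∀ x y z, le y x → le z x → le y z ∨ le z y
  root : N
  root_le : ∀ x, le root x
  leaf : V → N
  leaf_inj : Function.Injective leaf
  leaf_isLeaf : ∀ (v : V) (x : N), le (leaf v) x → x = leaf v
  leaves_eq_vertices : ∀ x : N, (∀ y, le x y → y = x) → ∃ v : V, x = leaf v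
  lab : V → Λ
  M : N → Λ → Λ → Bool
  M_symm : ∀ t a b, M t a b = M t b a
  adj_iff : ∀ u v : V, u ≠ v → ∃ t : N, IsLCA le (leaf u) (leaf v) t ∧
      (G.Adj u v ↔ M t (lab u) (lab v) = true)

/-- The depth of a tree-model: the maximum number of nodes on a root-to-leaf path,
i.e. the maximum number of ancestors (including itself) of a node. -/
noncomputable def TreeModel.depth {V : Type} {G : SimpleGraph V} (T : TreeModel G) : ℕ :=
  ⨆ x : T.N, Set.ncard {y | T.le y x}

/-- The diversity of a vertex subset `A` of `G`: the number of equivalence classes on `A` of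
the relation "same neighborhood outside `A`", i.e. the number of distinct sets
`N(v) \ A` for `v ∈ A`. -/
noncomputable def diversity {V : Type} (G : SimpleGraph V) (A : Set V) : ℕ :=
  Set.ncard ((fun v => {w | G.Adj v w ∧ w ∉ A}) '' A)

/-- The diversity of a vertex ordering `σ` of `G`: the maximum diversity of a prefix. -/
noncomputable def orderDiversity {V : Type} (G : SimpleGraph V) {n : ℕ} (σ : Fin n ≃ V) : ℕ :=
  ⨆ i : Fin (n + 1), diversity G (⇑σ '' {j : Fin n | (j : ℕ) < (i : ℕ)})

/-- The linear modular-width of `G`: the minimum diversity of a vertex ordering of `G`. -/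
noncomputable def linModularWidth (V : Type) (G : SimpleGraph V) : ℕ :=
  sInf {k | ∃ σ : Fin (Nat.card V) ≃ V, orderDiversity G σ = k}

/-- If `G` has a tree-model of depth at most `d` with at most `m` labels, then any vertex
ordering obtained by a pre-order traversal of the tree (i.e. any ordering in which the set
of leaves below any node forms an interval) has diversity at most `d·m`; in particular the
linear modular-width of `G` is at most `d·m`. -/
theorem treeModel_linModularWidth {V : Type} [Fintype V] (G : SimpleGraph V) (d m : ℕ)
    (T : TreeModel G) (hd : T.depth ≤ d) (hm : Nat.card T.Λ ≤ m)
    {n : ℕ} (σ : Fin n ≃ V)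
    (hσ : ∀ t : T.N, ∃ lo hi : ℕ, ∀ j : Fin n,
      T.le t (T.leaf (σ j)) ↔ lo ≤ (j : ℕ) ∧ (j : ℕ) < hi) :
    orderDiversity G σ ≤ d * m ∧ linModularWidth V G ≤ d * m := by
  classical
  have finN := T.finN
  have finΛ := T.finΛ
  have hNne : Nonempty T.N := ⟨T.root⟩
  -- key lemma: any prefix has diversity ≤ d * m
  have key : ∀ k : ℕ, diversity G (⇑σ '' {j : Fin n | (j : ℕ) < k}) ≤ d * m := by
    intro k
    set A : Set V := ⇑σ '' {j : Fin n | (j : ℕ) < k} with hA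
    set f : V → Set V := fun v => {w | G.Adj v w ∧ w ∉ A} with hf
    by_cases hAne : A = ∅
    · simp [diversity, hAne]
    -- A is nonempty, so V is nonempty, so d*m ≥ 1
    obtain ⟨v₀, hv₀⟩ := Set.nonempty_iff_ne_empty.mpr hAne
    have hsup : ∀ x : T.N, Set.ncard {y | T.le y x} ≤ T.depth := by
      intro x
      rw [TreeModel.depth]
      exact le_ciSup (f := fun x : T.N => Set.ncard {y | T.le y x}) (Set.Finite.bddAbove (Set.finite_range _)) x
    have hd1 : 1 ≤ d := by
      refine le_trans ?_ hd
      have h1 : 0 < Set.ncard {y | T.le y T.root} :=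
        (Set.ncard_pos (Set.toFinite _)).mpr ⟨T.root, T.le_refl T.root⟩
      exact le_trans h1 (hsup T.root)
    have hm1 : 1 ≤ m := by
      refine le_trans ?_ hm
      have : Nonempty T.Λ := ⟨T.lab v₀⟩
      exact Nat.one_le_iff_ne_zero.mpr (Nat.card_ne_zero.mpr ⟨this, finΛ⟩)
    by_cases hk : k < n
    · -- main case
      set i' : Fin n := ⟨k, hk⟩
      set w₀ : V := σ i' with hw₀def
      have hw₀ : w₀ ∉ A := by
        rintro ⟨j, hj, hje⟩
        have : j = i' := σ.injective hje
        simp only [Set.mem_setOf_eq, this] at hj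
        exact lt_irrefl k hj
      have hmemA : ∀ v ∈ A, v ≠ w₀ := fun v hv h => hw₀ (h ▸ hv)
      -- position of vertices outside A
      have hpos : ∀ w : V, w ∉ A → k ≤ ((σ.symm w : Fin n) : ℕ) := by
        intro w hw
        by_contra h
        push_neg at h
        exact hw ⟨σ.symm w, h, σ.apply_symm_apply w⟩
      -- crossing lemma
      have hcross : ∀ (v w : V) (t : T.N), v ∈ A → w ∉ A →
          T.le t (T.leaf v) → T.le t (T.leaf w) → T.le t (T.leaf w₀) := by
        rintro v w t ⟨jv, hjv, rfl⟩ hw htv htw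
        obtain ⟨lo, hi, hint⟩ := hσ t
        have h1 := (hint jv).mp htv
        have h2 := (hint (σ.symm w)).mp (by rwa [σ.apply_symm_apply])
        have hwk := hpos w hw
        exact (hint i').mpr ⟨le_trans h1.1 (le_of_lt hjv), lt_of_le_of_lt hwk h2.2⟩
      -- the LCA-with-w₀ map
      set a : V → T.N := fun v =>
        if h : v ≠ w₀ then (T.adj_iff v w₀ h).choose else T.root with ha
      have haspec : ∀ v, v ≠ w₀ → IsLCA T.le (T.leaf v) (T.leaf w₀) (a v) := by
        intro v h
        simp only [ha, dif_pos h]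
        exact (T.adj_iff v w₀ h).choose_spec.1
      -- main invariance lemma
      have hmain : ∀ v v', v ∈ A → v' ∈ A → a v = a v' → T.lab v = T.lab v' →
          f v = f v' := by
        intro v v' hv hv' haa hlab
        ext w
        simp only [hf, Set.mem_setOf_eq]
        by_cases hwA : w ∈ A
        · simp [hwA]
        · simp only [hwA, not_false_iff, and_true]
          have hvw : v ≠ w := fun h => hwA (h ▸ hv)
          have hv'w : v' ≠ w := fun h => hwA (h ▸ hv')
          obtain ⟨t, ht, hadj⟩ := T.adj_iff v w hvw
          obtain ⟨t', ht', hadj'⟩ := T.adj_iff v' w hv'w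
          have hav := haspec v (hmemA v hv)
          have hav' := haspec v' (hmemA v' hv')
          have htt' : t = t' := by
            -- t ≤ a v, t' ≤ a v' = a v
            have h1 : T.le t (a v) :=
              hav.2.2 t ht.1 (hcross v w t hv hwA ht.1 ht.2.1)
            have h2 : T.le t' (a v) := haa ▸
              hav'.2.2 t' ht'.1 (hcross v' w t' hv' hwA ht'.1 ht'.2.1)
            have h3 : T.le t (T.leaf v') :=
              T.le_trans _ _ _ h1 (haa ▸ hav'.1)
            have h4 : T.le t' (T.leaf v) :=
              T.le_trans _ _ _ h2 hav.1
            exact T.le_antisymm _ _ (ht'.2.2 t h3 ht.2.1) (ht.2.2 t' h4 ht'.2.1)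
          rw [hadj, hadj', htt', hlab]
      -- counting
      set g : V → T.N × T.Λ := fun v => (a v, T.lab v) with hg
      set h : T.N × T.Λ → Set V := fun p =>
        if hp : ∃ v, v ∈ A ∧ g v = p then f hp.choose else ∅ with hh
      have hfac : ∀ v ∈ A, f v = h (g v) := by
        intro v hv
        have hp : ∃ u, u ∈ A ∧ g u = g v := ⟨v, hv, rfl⟩
        simp only [hh, dif_pos hp]
        obtain ⟨hu1, hu2⟩ := hp.choose_spec
        have h1 : a hp.choose = a v := congrArg Prod.fst hu2
        have h2 : T.lab hp.choose = T.lab v := congrArg Prod.snd hu2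
        exact (hmain _ _ hu1 hv h1 h2).symm
      have himg : f '' A = h '' (g '' A) := by
        refine (Set.image_congr hfac).trans ?_
        exact Set.image_comp h g A
      have hsub : g '' A ⊆ {y | T.le y (T.leaf w₀)} ×ˢ (Set.univ : Set T.Λ) := by
        rintro p ⟨v, hv, rfl⟩
        exact ⟨(haspec v (hmemA v hv)).2.1, Set.mem_univ _⟩
      calc diversity G A = (h '' (g '' A)).ncard := by rw [diversity, ← hf, himg]
        _ ≤ (g '' A).ncard := Set.ncard_image_le (Set.toFinite _)
        _ ≤ ({y | T.le y (T.leaf w₀)} ×ˢ (Set.univ : Set T.Λ)).ncard :=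
            Set.ncard_le_ncard hsub (Set.toFinite _)
        _ = Set.ncard {y | T.le y (T.leaf w₀)} * Nat.card T.Λ := by
            rw [← Nat.card_coe_set_eq, Nat.card_congr (Equiv.Set.prod _ _),
              Nat.card_prod, Nat.card_coe_set_eq, Nat.card_coe_set_eq,
              Set.ncard_univ]
        _ ≤ d * m := by
            exact Nat.mul_le_mul (le_trans (hsup (T.leaf w₀)) hd) hm
    · -- A = univ
      push_neg at hk
      have hAuniv : A = Set.univ := by
        rw [hA]
        ext w
        simp only [Set.mem_image, Set.mem_setOf_eq, Set.mem_univ, iff_true]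
        exact ⟨σ.symm w, lt_of_lt_of_le (σ.symm w).isLt hk, σ.apply_symm_apply w⟩
      have : f '' A ⊆ {∅} := by
        rintro s ⟨v, hv, rfl⟩
        simp only [Set.mem_singleton_iff, hf]
        ext w
        simp [hAuniv]
      calc diversity G A ≤ ({∅} : Set (Set V)).ncard :=
            Set.ncard_le_ncard this (Set.toFinite _)
        _ = 1 := Set.ncard_singleton _
        _ ≤ d * m := Nat.one_le_iff_ne_zero.mpr (Nat.mul_ne_zero
            (Nat.one_le_iff_ne_zero.mp hd1) (Nat.one_le_iff_ne_zero.mp hm1))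
  have hdiv : orderDiversity G σ ≤ d * m :=
    ciSup_le fun i => key (i : ℕ)
  refine ⟨hdiv, ?_⟩
  have hn : Nat.card V = n := by
    rw [Nat.card_congr σ.symm, Nat.card_eq_fintype_card, Fintype.card_fin]
  set σ' : Fin (Nat.card V) ≃ V := (finCongr hn).trans σ with hσ'
  have hσ'div : orderDiversity G σ' ≤ d * m := by
    refine ciSup_le fun i => ?_
    have heq : ⇑σ' '' {j : Fin (Nat.card V) | (j : ℕ) < (i : ℕ)} =
        ⇑σ '' {j : Fin n | (j : ℕ) < (i : ℕ)} := by
      ext w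
      constructor
      · rintro ⟨j, hj, rfl⟩
        exact ⟨finCongr hn j, hj, rfl⟩
      · rintro ⟨j, hj, rfl⟩
        exact ⟨(finCongr hn).symm j, by simpa using hj, by simp [hσ']⟩
    rw [heq]
    exact key (i : ℕ)
  exact le_trans (csInf_le (OrderBot.bddBelow _) ⟨σ', rfl⟩) hσ'div
end

section
/- For every finite simple nonempty graph G, the twin-width satisfies tww(G) ≤ 2·mw(G) − 1, where mw(G) is the modular-width of G. Consequently, every graph class of bounded modular-width (equivalently, of bounded cliquewidth) has bounded twin-width. -/
/-- `P` is a partition of the vertex set: all parts are nonempty and every vertex lies in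
exactly one part. -/
def IsPartitionOn {V : Type} (P : Set (Set V)) : Prop :=
  (∀ A ∈ P, A.Nonempty) ∧ ∀ v : V, ∃! A : Set V, A ∈ P ∧ v ∈ A

/-- The pair `(A, B)` is impure: neither complete nor anti-complete, i.e. there is both an
adjacent pair and a non-adjacent pair between `A` and `B`. -/
def Impure {V : Type} (G : SimpleGraph V) (A B : Set V) : Prop :=
  (∃ a ∈ A, ∃ b ∈ B, G.Adj a b) ∧ (∃ a ∈ A, ∃ b ∈ B, ¬ G.Adj a b)

/-- A contraction sequence of an `n`-vertex graph `G` (indexed by the number of merges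
performed so far, from `0` up to `n − 1`): it starts with the partition into singletons,
ends with the one-part partition, and each partition is obtained from the previous one by
merging two parts. -/
structure ContractionSeq {V : Type} (G : SimpleGraph V) (n : ℕ) where
  part : ℕ → Set (Set V)
  partition : ∀ j < n, IsPartitionOn (part j)
  first : part 0 = {A | ∃ v : V, A = {v}}
  last : part (n - 1) = {Set.univ}
  merge : ∀ j, j + 1 < n → ∃ B C : Set V, B ∈ part j ∧ C ∈ part j ∧ B ≠ C ∧
    part (j + 1) = insert (B ∪ C) (part j \ {B, C})

/-- The width of a contraction sequence: the maximum degree of a part in the error graphs,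
i.e. the maximum over all partitions of the sequence and all parts `A` of the number of
other parts forming an impure pair with `A`. -/
noncomputable def ContractionSeq.width {V : Type} {G : SimpleGraph V} {n : ℕ}
    (S : ContractionSeq G n) : ℕ :=
  ⨆ j : Fin n, ⨆ A : ↥(S.part j), Set.ncard {B | B ∈ S.part j ∧ B ≠ ↑A ∧ Impure G ↑A B}

/-- The twin-width of `G`: the minimum width of a contraction sequence of `G`. -/
noncomputable def twinWidth {V : Type} (G : SimpleGraph V) : ℕ :=
  sInf {d | ∃ S : ContractionSeq G (Nat.card V), S.width = d}

/-- A laminar decomposition of the vertex set `V` (a rooted binary tree whose leaves are the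
vertices, encoded by the laminar family of its sets `Leaves(x)`): it contains `V` (the root)
and all singletons (the leaves), its members are nonempty and pairwise nested or disjoint,
and every non-singleton member splits into exactly two disjoint proper members (its two
children). -/
structure LaminarDecomp (V : Type) where
  mem : Set (Set V)
  univ_mem : Set.univ ∈ mem
  singleton_mem : ∀ v : V, {v} ∈ mem
  nonempty : ∀ A ∈ mem, A.Nonempty
  laminar : ∀ A ∈ mem, ∀ B ∈ mem, A ⊆ B ∨ B ⊆ A ∨ A ∩ B = ∅
  binary : ∀ A ∈ mem, (¬ ∃ v : V, A = {v}) →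
    ∃ B ∈ mem, ∃ C ∈ mem, B ≠ A ∧ C ≠ A ∧ B ∪ C = A ∧ B ∩ C = ∅

/-- The modular-width of `G`: the minimum over laminar decompositions `T` of the maximum
diversity of a member of `T`. -/
noncomputable def modularWidth {V : Type} (G : SimpleGraph V) : ℕ :=
  sInf {k | ∃ T : LaminarDecomp V, ∀ A ∈ T.mem, diversity G A ≤ k}

/-!
Contract the graph bottom-up along a laminar decomposition `T` of diversity `d`, so that each
member `M` of `T` ends up contracted into its at most `d` classes of the relation `∼_M`. For a
member `M` with children `B` and `C`: first contract `B` to its classes while `C` stays in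
singletons, then `C` while `B` stays in its classes, and finally merge the at most `2d`
resulting parts inside the classes of `M`. At every moment the vertex set splits into disjoint
regions (the member being processed, and the finished or untouched subtrees hanging off the
path to it), each holding at most `2d` parts whose vertices have the same neighbours outside
the region. Parts in different regions form pure pairs, so every error degree is below `2d`.
-/

open Set

namespace TwinWidth

variable {V : Type} {G : SimpleGraph V}

structure IsPartitionOf (π : Set (Set V)) (M : Set V) : Prop where
  nonempty : ∀ A ∈ π, A.Nonempty
  pairwiseDisjoint : π.PairwiseDisjoint id
  sUnion_eq : ⋃₀ π = M

def IsMerge (π π' : Set (Set V)) : Prop :=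
  ∃ B C : Set V, B ∈ π ∧ C ∈ π ∧ B ≠ C ∧ π' = insert (B ∪ C) (π \ {B, C})

def Refines (ρ σ : Set (Set V)) : Prop := ∀ Q ∈ ρ, ∃ S ∈ σ, Q ⊆ S

def singletons (M : Set V) : Set (Set V) := (fun v => {v}) '' M

namespace IsPartitionOf

variable {π ρ σ : Set (Set V)} {M B C : Set V}

lemma subset (h : IsPartitionOf π M) {A : Set V} (hA : A ∈ π) : A ⊆ M :=
  h.sUnion_eq ▸ subset_sUnion_of_mem hA

lemma isPartitionOn (h : IsPartitionOf π univ) : IsPartitionOn π :=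
  ⟨h.nonempty, (h.pairwiseDisjoint.isPartition_of_exists_of_ne_empty
    (fun v => mem_sUnion.1 (h.sUnion_eq ▸ mem_univ v))
    (fun h0 => not_nonempty_empty (h.nonempty _ h0))).2⟩

lemma union (hρ : IsPartitionOf ρ B) (hσ : IsPartitionOf σ C) (hBC : Disjoint B C) :
    IsPartitionOf (ρ ∪ σ) (B ∪ C) where
  nonempty A hA := hA.elim (hρ.nonempty A) (hσ.nonempty A)
  pairwiseDisjoint := pairwiseDisjoint_union.2 ⟨hρ.pairwiseDisjoint, hσ.pairwiseDisjoint,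
    fun _ hi _ hj _ => hBC.mono (hρ.subset hi) (hσ.subset hj)⟩
  sUnion_eq := by rw [sUnion_union, hρ.sUnion_eq, hσ.sUnion_eq]

lemma notMem_of_disjoint (hρ : IsPartitionOf ρ B) (hσ : IsPartitionOf σ C) (hBC : Disjoint B C)
    {A : Set V} (hA : A ∈ ρ) : A ∉ σ := fun hAσ =>
  (hρ.nonempty A hA).ne_empty (disjoint_self.1 (hBC.mono (hρ.subset hA) (hσ.subset hAσ)))

lemma merge (h : IsPartitionOf π M) {π' : Set (Set V)} (hm : IsMerge π π') :
    IsPartitionOf π' M := by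
  obtain ⟨B, C, hB, hC, -, rfl⟩ := hm
  refine ⟨?_, ?_, ?_⟩
  · rintro A (rfl | hA)
    exacts [(h.nonempty B hB).mono subset_union_left, h.nonempty A hA.1]
  · refine pairwiseDisjoint_insert.2 ⟨h.pairwiseDisjoint.subset sdiff_subset, ?_⟩
    rintro A ⟨hA, hABC⟩ -
    simp only [mem_insert_iff, mem_singleton_iff, not_or] at hABC
    exact disjoint_union_left.2
      ⟨h.pairwiseDisjoint hB hA (Ne.symm hABC.1), h.pairwiseDisjoint hC hA (Ne.symm hABC.2)⟩
  · rw [← h.sUnion_eq]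
    ext x
    simp only [sUnion_insert, mem_union, mem_sUnion, mem_sdiff, mem_insert_iff,
      mem_singleton_iff, not_or]
    grind

lemma ncard_merge [Finite V] (h : IsPartitionOf π M) {π' : Set (Set V)} (hm : IsMerge π π') :
    π'.ncard + 1 = π.ncard := by
  obtain ⟨B, C, hB, hC, hBC, rfl⟩ := hm
  have hfresh : B ∪ C ∉ π \ {B, C} := by
    rintro ⟨hmem, hne⟩
    simp only [mem_insert_iff, mem_singleton_iff, not_or] at hne
    obtain ⟨v, hv⟩ := h.nonempty B hB
    exact hne.1 (h.pairwiseDisjoint.elim_set hmem hB v (Or.inl hv) hv)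
  have hpair : {B, C} ⊆ π := insert_subset hB (singleton_subset_iff.2 hC)
  have htwo : 2 ≤ π.ncard := ncard_pair hBC ▸ ncard_le_ncard hpair
  rw [ncard_insert_of_notMem hfresh, ncard_sdiff hpair, ncard_pair hBC]
  omega

lemma exists_merge_of_refines (hρ : IsPartitionOf ρ M) (hσ : IsPartitionOf σ M)
    (href : Refines ρ σ) (hne : ρ ≠ σ) :
    ∃ Q ∈ ρ, ∃ Q' ∈ ρ, Q ≠ Q' ∧ ∃ S ∈ σ, Q ⊆ S ∧ Q' ⊆ S := by
  by_contra! hsep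
  -- otherwise every part of `σ` contains a unique part of `ρ`, which therefore fills it
  have hfill : ∀ Q ∈ ρ, ∀ S ∈ σ, Q ⊆ S → Q = S := by
    refine fun Q hQ S hS hQS => hQS.antisymm fun x hx => ?_
    obtain ⟨Q', hQ', hxQ'⟩ := mem_sUnion.1 (hρ.sUnion_eq ▸ hσ.subset hS hx)
    obtain ⟨S', hS', hQ'S'⟩ := href Q' hQ'
    obtain rfl := hσ.pairwiseDisjoint.elim_set hS' hS x (hQ'S' hxQ') hx
    by_contra hxQ
    exact hsep Q hQ Q' hQ' (by rintro rfl; exact hxQ hxQ') S' hS' hQS hQ'S'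
  refine hne (Subset.antisymm (fun Q hQ => ?_) fun S hS => ?_)
  · obtain ⟨S, hS, hQS⟩ := href Q hQ
    exact hfill Q hQ S hS hQS ▸ hS
  · obtain ⟨x, hx⟩ := hσ.nonempty S hS
    obtain ⟨Q, hQ, hxQ⟩ := mem_sUnion.1 (hρ.sUnion_eq ▸ hσ.subset hS hx)
    obtain ⟨S', hS', hQS'⟩ := href Q hQ
    obtain rfl := hσ.pairwiseDisjoint.elim_set hS' hS x (hQS' hxQ) hx
    exact hfill Q hQ S' hS' hQS' ▸ hQ

end IsPartitionOf

lemma isPartitionOf_singletons (M : Set V) : IsPartitionOf (singletons M) M where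
  nonempty := by rintro _ ⟨v, -, rfl⟩; exact singleton_nonempty v
  pairwiseDisjoint := by
    rintro _ ⟨u, -, rfl⟩ _ ⟨v, -, rfl⟩ huv
    exact disjoint_singleton.2 fun h => huv (h ▸ rfl)
  sUnion_eq := by rw [singletons, sUnion_image, biUnion_of_singleton]

inductive MergePath (P : Set (Set V) → Prop) : Set (Set V) → Set (Set V) → Prop
  | refl {π} : P π → MergePath P π π
  | head {π ρ σ} : P π → IsMerge π ρ → MergePath P ρ σ → MergePath P π σ

namespace MergePath

variable {P P' : Set (Set V) → Prop} {π σ τ : Set (Set V)}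

lemma mono (h : MergePath P π σ) (hP : ∀ ρ, P ρ → P' ρ) : MergePath P' π σ := by
  induction h with
  | refl hπ => exact .refl (hP _ hπ)
  | head hπ hm _ ih => exact .head (hP _ hπ) hm ih

lemma trans (h₁ : MergePath P π σ) (h₂ : MergePath P σ τ) : MergePath P π τ := by
  induction h₁ with
  | refl _ => exact h₂
  | head hπ hm _ ih => exact .head hπ hm (ih h₂)

lemma union_right (h : MergePath P π σ) (E : Set (Set V)) (hP : ∀ ρ, P ρ → P' (ρ ∪ E))
    (hE : ∀ ρ, P ρ → ∀ A ∈ ρ, A ∉ E) : MergePath P' (π ∪ E) (σ ∪ E) := by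
  induction h with
  | refl hπ => exact .refl (hP _ hπ)
  | @head π ρ σ hπ hm _ ih =>
    refine .head (hP _ hπ) ?_ ih
    obtain ⟨B, C, hB, hC, hBC, rfl⟩ := hm
    refine ⟨B, C, Or.inl hB, Or.inl hC, hBC, ?_⟩
    have hEBC : Disjoint E {B, C} :=
      disjoint_insert_right.2 ⟨hE π hπ B hB, disjoint_singleton_right.2 (hE π hπ C hC)⟩
    rw [union_sdiff_distrib, insert_union, sdiff_eq_left.2 hEBC]

lemma exists_seq (h : MergePath P π σ) :
    ∃ (k : ℕ) (f : ℕ → Set (Set V)), f 0 = π ∧ f k = σ ∧ (∀ j ≤ k, P (f j)) ∧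
      ∀ j < k, IsMerge (f j) (f (j + 1)) := by
  induction h with
  | @refl π hπ => exact ⟨0, fun _ => π, rfl, rfl, fun _ _ => hπ, fun _ h => absurd h (by omega)⟩
  | @head π ρ σ hπ hm _ ih =>
    obtain ⟨k, f, hf0, hfk, hfP, hfm⟩ := ih
    refine ⟨k + 1, fun | 0 => π | j + 1 => f j, rfl, hfk, fun j hj => ?_, fun j hj => ?_⟩
    · rcases j with _ | j
      exacts [hπ, hfP j (by omega)]
    · rcases j with _ | j
      exacts [by simpa [hf0] using hm, hfm j (by omega)]

end MergePath

lemma IsPartitionOf.mergePath_of_refines [Finite V] {M : Set V} {ρ σ : Set (Set V)} {n : ℕ}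
    (hσ : IsPartitionOf σ M) (hρ : IsPartitionOf ρ M) (href : Refines ρ σ) (hn : ρ.ncard ≤ n) :
    MergePath (fun τ => IsPartitionOf τ M ∧ Refines τ σ ∧ τ.ncard ≤ n) ρ σ := by
  by_cases hρσ : ρ = σ
  · subst hρσ
    exact .refl ⟨hρ, href, hn⟩
  obtain ⟨Q, hQ, Q', hQ', hQQ', S, hS, hQS, hQ'S⟩ := hρ.exists_merge_of_refines hσ href hρσ
  have hm : IsMerge ρ (insert (Q ∪ Q') (ρ \ {Q, Q'})) := ⟨Q, Q', hQ, hQ', hQQ', rfl⟩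
  have hcard := hρ.ncard_merge hm
  refine .head ⟨hρ, href, hn⟩ hm (hσ.mergePath_of_refines (hρ.merge hm) ?_ (by omega))
  rintro R (rfl | hR)
  exacts [⟨S, hS, union_subset hQS hQ'S⟩, href R hR.1]
termination_by ρ.ncard
decreasing_by omega

variable (G) in
def AgreeOutside (m Q : Set V) : Prop :=
  ∀ p ∈ Q, ∀ q ∈ Q, G.neighborSet p \ m = G.neighborSet q \ m

variable (G) in
def outsideClass (M : Set V) (v : V) : Set V :=
  {u ∈ M | G.neighborSet u \ M = G.neighborSet v \ M}

variable (G) in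
def outsideClasses (M : Set V) : Set (Set V) := outsideClass G M '' M

lemma AgreeOutside.mono {m Q Q' : Set V} (h : AgreeOutside G m Q) (hQ : Q' ⊆ Q) :
    AgreeOutside G m Q' :=
  fun p hp q hq => h p (hQ hp) q (hQ hq)

lemma agreeOutside_of_subsingleton {m Q : Set V} (hQ : Q.Subsingleton) : AgreeOutside G m Q :=
  fun _ hp _ hq => by rw [hQ hp hq]

lemma not_impure_of_agreeOutside {mA mB A B : Set V} (hA : AgreeOutside G mA A)
    (hB : AgreeOutside G mB B) (hAmB : Disjoint A mB) (hBmA : Disjoint B mA) :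
    ¬ Impure G A B := by
  rintro ⟨⟨a, ha, b, hb, hab⟩, ⟨a', ha', b', hb', hab'⟩⟩
  have hb_out : b ∈ G.neighborSet a' \ mA :=
    hA a ha a' ha' ▸ ⟨hab, disjoint_left.1 hBmA hb⟩
  have ha'_out : a' ∈ G.neighborSet b' \ mB :=
    hB b hb b' hb' ▸ ⟨hb_out.1.symm, disjoint_left.1 hAmB ha'⟩
  exact hab' ha'_out.1.symm

variable (G) in
lemma agreeOutside_outsideClass (M : Set V) (v : V) :
    AgreeOutside G M (outsideClass G M v) :=
  fun _ hp _ hq => hp.2.trans hq.2.symm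

lemma outsideClass_subset_outsideClass {B M : Set V} (hBM : B ⊆ M) (v : V) :
    outsideClass G B v ⊆ outsideClass G M v := by
  rintro u ⟨huB, hu⟩
  refine ⟨hBM huB, ?_⟩
  -- outside `M` is in particular outside `B`
  rw [← union_eq_self_of_subset_left hBM, ← sdiff_sdiff, hu, sdiff_sdiff]

variable (G) in
lemma isPartitionOf_outsideClasses (M : Set V) : IsPartitionOf (outsideClasses G M) M where
  nonempty := by rintro _ ⟨v, hv, rfl⟩; exact ⟨v, hv, rfl⟩
  pairwiseDisjoint := by
    rintro _ ⟨u, -, rfl⟩ _ ⟨v, -, rfl⟩ huv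
    refine disjoint_left.2 fun x hxu hxv => huv ?_
    simp only [outsideClass, ← hxu.2, hxv.2]
  sUnion_eq := by
    refine Subset.antisymm (sUnion_subset ?_) fun v hv => ⟨_, ⟨v, hv, rfl⟩, hv, rfl⟩
    rintro _ ⟨v, -, rfl⟩
    exact sep_subset _ _

variable (G) in
lemma ncard_outsideClasses_le [Finite V] (M : Set V) :
    (outsideClasses G M).ncard ≤ diversity G M := by
  have : outsideClasses G M =
      (fun N => {u ∈ M | G.neighborSet u \ M = N}) '' ((fun v => G.neighborSet v \ M) '' M) := by
    rw [image_image]; rfl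
  rw [this]
  exact ncard_image_le (toFinite _)

lemma outsideClasses_univ [Nonempty V] : outsideClasses G univ = {univ} := by
  have hclass (v : V) : outsideClass G univ v = univ := by simp [outsideClass]
  simp [outsideClasses, hclass, image_univ, range_const]

lemma outsideClasses_singleton (v : V) : outsideClasses G {v} = singletons {v} := by
  have : outsideClass G {v} v = {v} := by ext; simp +contextual [outsideClass]
  simp [outsideClasses, singletons, this]

structure IsClusteredPartition (G : SimpleGraph V) (k : ℕ) (π : Set (Set V)) (M : Set V) : Prop
    extends IsPartitionOf π M where
  exists_regions : ∃ R : Set (Set V), R.PairwiseDisjoint id ∧ (∀ m ∈ R, m ⊆ M) ∧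
    (∀ Q ∈ π, ∃ m ∈ R, Q ⊆ m ∧ AgreeOutside G m Q) ∧ ∀ m ∈ R, {Q ∈ π | Q ⊆ m}.ncard ≤ k

namespace IsClusteredPartition

variable {k : ℕ} {π ρ σ : Set (Set V)} {M B C : Set V}

lemma ncard_impure_le [Finite V] (h : IsClusteredPartition G k π M) {A : Set V} (hA : A ∈ π) :
    {B | B ∈ π ∧ B ≠ A ∧ Impure G A B}.ncard ≤ k - 1 := by
  obtain ⟨R, hRdisj, -, hreg, hcard⟩ := h.exists_regions
  obtain ⟨m, hm, hAm, hAgA⟩ := hreg A hA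
  have hsub : {B | B ∈ π ∧ B ≠ A ∧ Impure G A B} ⊆ {Q ∈ π | Q ⊆ m} \ {A} := by
    rintro B ⟨hB, hBA, himp⟩
    obtain ⟨m', hm', hBm', hAgB⟩ := hreg B hB
    obtain rfl : m' = m := by
      by_contra hne
      have hdisj : Disjoint m' m := hRdisj hm' hm hne
      exact not_impure_of_agreeOutside hAgA hAgB (hdisj.symm.mono_left hAm)
        (hdisj.mono_left hBm') himp
    exact ⟨⟨hB, hBm'⟩, hBA⟩
  calc _ ≤ ({Q ∈ π | Q ⊆ m} \ {A}).ncard := ncard_le_ncard hsub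
    _ = {Q ∈ π | Q ⊆ m}.ncard - 1 := ncard_sdiff_singleton_of_mem ⟨hA, hAm⟩
    _ ≤ k - 1 := Nat.sub_le_sub_right (hcard m hm) 1

lemma union [Finite V] (hρ : IsClusteredPartition G k ρ B) (hσ : IsClusteredPartition G k σ C)
    (hBC : Disjoint B C) : IsClusteredPartition G k (ρ ∪ σ) (B ∪ C) := by
  obtain ⟨Rρ, hRρ, hRρB, hregρ, hcardρ⟩ := hρ.exists_regions
  obtain ⟨Rσ, hRσ, hRσC, hregσ, hcardσ⟩ := hσ.exists_regions
  have hsep {ρ σ : Set (Set V)} {B C m : Set V} (hσ : IsPartitionOf σ C) (hBC : Disjoint B C)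
      (hmB : m ⊆ B) : {Q ∈ ρ ∪ σ | Q ⊆ m} ⊆ {Q ∈ ρ | Q ⊆ m} := by
    rintro Q ⟨hQ | hQ, hQm⟩
    · exact ⟨hQ, hQm⟩
    · exact absurd (disjoint_self.1 (hBC.mono (hQm.trans hmB) (hσ.subset hQ)))
        (hσ.nonempty Q hQ).ne_empty
  refine ⟨hρ.toIsPartitionOf.union hσ.toIsPartitionOf hBC, Rρ ∪ Rσ, ?_, ?_, ?_, ?_⟩
  · exact pairwiseDisjoint_union.2 ⟨hRρ, hRσ,
      fun i hi j hj _ => hBC.mono (hRρB i hi) (hRσC j hj)⟩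
  · rintro m (hm | hm)
    exacts [(hRρB m hm).trans subset_union_left, (hRσC m hm).trans subset_union_right]
  · rintro Q (hQ | hQ)
    · obtain ⟨m, hm, h⟩ := hregρ Q hQ; exact ⟨m, Or.inl hm, h⟩
    · obtain ⟨m, hm, h⟩ := hregσ Q hQ; exact ⟨m, Or.inr hm, h⟩
  · rintro m (hm | hm)
    · exact (ncard_le_ncard (hsep hσ.toIsPartitionOf hBC (hRρB m hm))).trans (hcardρ m hm)
    · rw [union_comm]
      exact (ncard_le_ncard (hsep hρ.toIsPartitionOf hBC.symm (hRσC m hm))).trans (hcardσ m hm)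

end IsClusteredPartition

lemma isClusteredPartition_singletons [Finite V] {k : ℕ} (hk : 1 ≤ k) (M : Set V) :
    IsClusteredPartition G k (singletons M) M := by
  refine ⟨isPartitionOf_singletons M, singletons M, (isPartitionOf_singletons M).pairwiseDisjoint,
    fun m hm => (isPartitionOf_singletons M).subset hm, fun Q hQ => ⟨Q, hQ, subset_rfl, ?_⟩, ?_⟩
  · obtain ⟨v, -, rfl⟩ := hQ
    exact agreeOutside_of_subsingleton subsingleton_singleton
  · rintro _ ⟨v, -, rfl⟩
    calc _ ≤ ({{v}} : Set (Set V)).ncard := ncard_le_ncard <| by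
            rintro _ ⟨⟨u, -, rfl⟩, huv⟩
            simpa using huv
      _ = 1 := ncard_singleton _
      _ ≤ k := hk

lemma isClusteredPartition_of_refines [Finite V] {k : ℕ} {M : Set V} {ρ : Set (Set V)}
    (hρ : IsPartitionOf ρ M) (href : Refines ρ (outsideClasses G M)) (hk : ρ.ncard ≤ k) :
    IsClusteredPartition G k ρ M := by
  refine ⟨hρ, {M}, pairwiseDisjoint_singleton _ _, fun m hm => hm ▸ subset_rfl,
    fun Q hQ => ⟨M, rfl, hρ.subset hQ, ?_⟩, fun m _ => (ncard_le_ncard (sep_subset _ _)).trans hk⟩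
  obtain ⟨_, ⟨v, -, rfl⟩, hQv⟩ := href Q hQ
  exact (agreeOutside_outsideClass G M v).mono hQv

lemma mergePath_union [Finite V] {k : ℕ} {B C : Set V} (hBC : Disjoint B C)
    (hB : MergePath (IsClusteredPartition G k · B) (singletons B) (outsideClasses G B))
    (hC : MergePath (IsClusteredPartition G k · C) (singletons C) (outsideClasses G C))
    (hk : 1 ≤ k) (hkBC : (outsideClasses G B).ncard + (outsideClasses G C).ncard ≤ k) :
    MergePath (IsClusteredPartition G k · (B ∪ C)) (singletons (B ∪ C))
      (outsideClasses G (B ∪ C)) := by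
  have hclassesB := isClusteredPartition_of_refines (isPartitionOf_outsideClasses G B)
    (fun Q hQ => ⟨Q, hQ, subset_rfl⟩) ((Nat.le_add_right _ _).trans hkBC)
  have h₁ := hB.union_right (P' := (IsClusteredPartition G k · (B ∪ C))) (singletons C)
    (fun τ hτ => hτ.union (isClusteredPartition_singletons hk C) hBC)
    (fun τ hτ A hA => hτ.notMem_of_disjoint (isPartitionOf_singletons C) hBC hA)
  have h₂ := hC.union_right (P' := (IsClusteredPartition G k · (B ∪ C))) (outsideClasses G B)
    (fun τ hτ => union_comm C B ▸ hτ.union hclassesB hBC.symm)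
    (fun τ hτ A hA => hτ.notMem_of_disjoint (isPartitionOf_outsideClasses G B) hBC.symm hA)
  have hpart := (isPartitionOf_outsideClasses G B).union (isPartitionOf_outsideClasses G C) hBC
  have href : Refines (outsideClasses G B ∪ outsideClasses G C) (outsideClasses G (B ∪ C)) := by
    rintro _ (⟨v, hv, rfl⟩ | ⟨v, hv, rfl⟩)
    · exact ⟨_, ⟨v, Or.inl hv, rfl⟩, outsideClass_subset_outsideClass subset_union_left v⟩
    · exact ⟨_, ⟨v, Or.inr hv, rfl⟩, outsideClass_subset_outsideClass subset_union_right v⟩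
  have h₃ := ((isPartitionOf_outsideClasses G (B ∪ C)).mergePath_of_refines hpart href le_rfl).mono
    fun τ ⟨hτ, hτref, hτk⟩ =>
      isClusteredPartition_of_refines hτ hτref (hτk.trans ((ncard_union_le _ _).trans hkBC))
  rw [singletons, image_union]
  exact h₁.trans (union_comm _ (singletons C) ▸ h₂.trans (union_comm (outsideClasses G C) _ ▸ h₃))

lemma mergePath_of_laminarDecomp [Finite V] {T : LaminarDecomp V} {d : ℕ} (hd : 1 ≤ d)
    (hT : ∀ A ∈ T.mem, diversity G A ≤ d) {M : Set V} (hM : M ∈ T.mem) :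
    MergePath (IsClusteredPartition G (2 * d) · M) (singletons M) (outsideClasses G M) := by
  induction M using WellFoundedLT.induction with
  | _ M ih =>
    by_cases hsing : ∃ v, M = {v}
    · obtain ⟨v, rfl⟩ := hsing
      rw [outsideClasses_singleton]
      exact .refl (isClusteredPartition_singletons (by omega) _)
    obtain ⟨B, hB, C, hC, hBM, hCM, rfl, hBC⟩ := T.binary M hM hsing
    have hdisj : Disjoint B C := disjoint_iff_inter_eq_empty.2 hBC
    refine mergePath_union hdisj (ih B (subset_union_left.lt_of_ne hBM) hB)
      (ih C (subset_union_right.lt_of_ne hCM) hC) (by omega) ?_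
    have := (ncard_outsideClasses_le G B).trans (hT B hB)
    have := (ncard_outsideClasses_le G C).trans (hT C hC)
    omega

lemma _root_.ContractionSeq.width_le {n w : ℕ} (S : ContractionSeq G n)
    (h : ∀ j < n, ∀ A ∈ S.part j, {B | B ∈ S.part j ∧ B ≠ A ∧ Impure G A B}.ncard ≤ w) :
    S.width ≤ w :=
  ciSup_le' fun j => ciSup_le' fun A => h j j.2 A A.2

lemma MergePath.exists_contractionSeq [Finite V] {P : Set (Set V) → Prop}
    (hP : ∀ τ, P τ → IsPartitionOf τ univ) (h : MergePath P (singletons univ) {univ}) :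
    ∃ S : ContractionSeq G (Nat.card V), ∀ j < Nat.card V, P (S.part j) := by
  obtain ⟨k, f, hf0, hfk, hfP, hfm⟩ := h.exists_seq
  have hcount : ∀ j ≤ k, (f j).ncard + j = Nat.card V := by
    intro j hj
    induction j with
    | zero => rw [hf0, singletons, ncard_image_of_injective _ singleton_injective, ncard_univ]; rfl
    | succ j ih =>
      have := (hP _ (hfP j (by omega))).ncard_merge (hfm j (by omega))
      have := ih (by omega)
      omega
  have hk : k + 1 = Nat.card V := by
    have := hcount k le_rfl
    rw [hfk, ncard_singleton] at this
    omega
  refine ⟨⟨f, fun j hj => (hP _ (hfP j (by omega))).isPartitionOn, ?_, ?_,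
    fun j hj => hfm j (by omega)⟩, fun j hj => hfP j (by omega)⟩
  · ext A
    simp [hf0, singletons, eq_comm]
  · rwa [show Nat.card V - 1 = k by omega]

variable (V) in
lemma nonempty_laminarDecomp [Finite V] [Nonempty V] : Nonempty (LaminarDecomp V) := by
  obtain ⟨n, ⟨e⟩⟩ := Finite.exists_equiv_fin V
  let : LinearOrder V := LinearOrder.lift' e e.injective
  obtain ⟨v₀, -, hv₀⟩ := exists_min_image (univ : Set V) id (toFinite _) univ_nonempty
  refine ⟨⟨{A | (∃ v, A = {v}) ∨ ∃ v, A = Ici v}, Or.inr ⟨v₀, ?_⟩, fun v => Or.inl ⟨v, rfl⟩,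
    ?_, ?_, ?_⟩⟩
  · exact (eq_univ_of_forall fun v => hv₀ v (mem_univ v)).symm
  · rintro A (⟨v, rfl⟩ | ⟨v, rfl⟩)
    exacts [singleton_nonempty v, nonempty_Ici]
  · rintro A (⟨a, rfl⟩ | ⟨a, rfl⟩) B (⟨b, rfl⟩ | ⟨b, rfl⟩)
    · by_cases hab : a = b
      · exact Or.inl (hab ▸ subset_rfl)
      · exact Or.inr (Or.inr (singleton_inter_eq_empty.2 hab))
    · by_cases hab : b ≤ a
      · exact Or.inl (singleton_subset_iff.2 hab)
      · exact Or.inr (Or.inr (singleton_inter_eq_empty.2 hab))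
    · by_cases hba : a ≤ b
      · exact Or.inr (Or.inl (singleton_subset_iff.2 hba))
      · exact Or.inr (Or.inr (inter_singleton_eq_empty.2 hba))
    · rcases le_total a b with hab | hba
      exacts [Or.inr (Or.inl (Ici_subset_Ici.2 hab)), Or.inl (Ici_subset_Ici.2 hba)]
  · rintro A (⟨v, rfl⟩ | ⟨v, rfl⟩) hsing
    · exact absurd ⟨v, rfl⟩ hsing
    have hne : (Ioi v).Nonempty := by
      by_contra! h
      exact hsing ⟨v, by rw [← Ioi_insert, h, insert_empty_eq]⟩
    obtain ⟨w, hvw, hw⟩ := exists_min_image (Ioi v) id (toFinite _) hne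
    have hIoi : Ioi v = Ici w :=
      Subset.antisymm (fun u hu => hw u hu) fun u hu => mem_Ioi.2 (hvw.trans_le hu)
    refine ⟨{v}, Or.inl ⟨v, rfl⟩, Ici w, Or.inr ⟨w, rfl⟩, fun h => hsing ⟨v, h.symm⟩,
      fun h => ?_, by rw [← hIoi, singleton_union, Ioi_insert], ?_⟩
    · exact lt_irrefl v (by rw [← mem_Ioi, hIoi, h]; exact self_mem_Ici)
    · rw [← hIoi, singleton_inter_eq_empty]
      exact lt_irrefl v

lemma exists_laminarDecomp_diversity_le_modularWidth [Finite V] [Nonempty V] :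
    ∃ T : LaminarDecomp V, ∀ A ∈ T.mem, diversity G A ≤ modularWidth G := by
  obtain ⟨T⟩ := nonempty_laminarDecomp V
  refine Nat.sInf_mem (s := {k | ∃ T : LaminarDecomp V, ∀ A ∈ T.mem, diversity G A ≤ k}) ?_
  exact ⟨_, T, fun A _ => ncard_le_ncard (subset_univ _) (toFinite _)⟩

lemma diversity_univ [Nonempty V] : diversity G univ = 1 := by
  simp [diversity, image_univ, range_const]

lemma twinWidth_le_of_laminarDecomp [Finite V] [Nonempty V] {T : LaminarDecomp V} {d : ℕ}
    (hd : 1 ≤ d) (hT : ∀ A ∈ T.mem, diversity G A ≤ d) : twinWidth G ≤ 2 * d - 1 := by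
  have hpath := mergePath_of_laminarDecomp hd hT T.univ_mem
  rw [outsideClasses_univ] at hpath
  obtain ⟨S, hS⟩ := hpath.exists_contractionSeq (G := G) fun τ hτ => hτ.toIsPartitionOf
  calc twinWidth G ≤ S.width := Nat.sInf_le ⟨S, rfl⟩
    _ ≤ 2 * d - 1 := S.width_le fun j hj A hA => (hS j hj).ncard_impure_le hA

lemma twinWidth_le_two_mul_modularWidth_sub_one [Finite V] [Nonempty V] :
    twinWidth G ≤ 2 * modularWidth G - 1 := by
  obtain ⟨T, hT⟩ := exists_laminarDecomp_diversity_le_modularWidth (G := G)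
  exact twinWidth_le_of_laminarDecomp (diversity_univ (G := G) ▸ hT univ T.univ_mem) hT

end TwinWidth

/-- `tww(G) ≤ 2·mw(G) − 1` for every finite nonempty graph; consequently, every family of
graphs of bounded modular-width (equivalently, bounded cliquewidth) has bounded twin-width. -/
theorem twinWidth_le_modularWidth :
    (∀ {V : Type} [Finite V] [Nonempty V] (G : SimpleGraph V),
      twinWidth G ≤ 2 * modularWidth G - 1) ∧
    (∀ (ι : Type) (Vf : ι → Type) (Gf : ∀ i, SimpleGraph (Vf i)),
      (∀ i, Finite (Vf i)) → (∀ i, Nonempty (Vf i)) →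
      ∀ b : ℕ, (∀ i, modularWidth (Gf i) ≤ b) → ∃ B : ℕ, ∀ i, twinWidth (Gf i) ≤ B) := by
  refine ⟨fun G => TwinWidth.twinWidth_le_two_mul_modularWidth_sub_one, ?_⟩
  intro ι Vf Gf hfin hne b hb
  refine ⟨2 * b, fun i => ?_⟩
  have := hfin i
  have := hne i
  have := TwinWidth.twinWidth_le_two_mul_modularWidth_sub_one (G := Gf i)
  have := hb i
  omega
end

section
/- Let G be a finite simple graph, let ≤ be a linear order on V(G), let d ∈ ℕ, and let k = wcol_{2d}(G,≤). For each vertex u, let F_u = { v ∈ V(G) : u ∈ WReach_{2d}[v] }. Then the family F = { F_u : u ∈ V(G) } is a distance-d neighborhood cover of G of radius 2d and overlap k: (i) for every vertex w there exists u with Ball_d[w] ⊆ F_u; (ii) for every u, the induced subgraph G[F_u] is connected and every vertex of F_u is at distance at most 2d from u within G[F_u]; and (iii) every vertex belongs to at most k of the sets F_u. -/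
/-- The ball of radius `d` around `u` in `G`: all vertices joined to `u` by a walk of length
at most `d`. -/
def ball {V : Type} (G : SimpleGraph V) (d : ℕ) (u : V) : Set V :=
  {v | ∃ w : G.Walk u v, w.length ≤ d}

/-- The weak `d`-reachability set of `v` (with respect to the linear order on `V`): all
vertices `u ≤ v` joined to `v` by a path of length at most `d` all of whose vertices are
`≥ u`. -/
def WReach {V : Type} [LinearOrder V] (G : SimpleGraph V) (d : ℕ) (v : V) : Set V :=
  {u | ∃ w : G.Walk v u, w.IsPath ∧ w.length ≤ d ∧ ∀ x ∈ w.support, u ≤ x}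

/-- The weak `d`-coloring number of `(G, ≤)`: the maximum size of a weak `d`-reachability
set. -/
noncomputable def wcol {V : Type} [LinearOrder V] (G : SimpleGraph V) (d : ℕ) : ℕ :=
  ⨆ v : V, Set.ncard (WReach G d v)

/-- A walk whose support lies in `s` lifts to a walk in the induced subgraph `G[s]`. -/
lemma lift_walk {V : Type} (G : SimpleGraph V) (s : Set V) :
    ∀ {a b : V} (p : G.Walk a b), (∀ x ∈ p.support, x ∈ s) →
    ∀ (ha : a ∈ s) (hb : b ∈ s),
    ∃ q : (G.induce s).Walk ⟨a, ha⟩ ⟨b, hb⟩, q.length = p.length := by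
  intro a b p
  induction p with
  | nil => intro _ ha hb; exact ⟨SimpleGraph.Walk.nil, rfl⟩
  | @cons a c b h p ih =>
    intro hs ha hb
    have hc : c ∈ s := hs c (by simp)
    obtain ⟨q, hq⟩ := ih (fun x hx => hs x (by simp [hx])) hc hb
    exact ⟨SimpleGraph.Walk.cons (by simpa using h) q, by simp [hq]⟩

/-- The inverse weak reachability sets `F_u = {v : u ∈ WReach_{2d}[v]}` form a distance-`d`
neighborhood cover of radius `2d` and overlap `wcol_{2d}(G, ≤)`: (i) every ball of radius `d`
is contained in some `F_u`; (ii) every `G[F_u]` is connected, of radius at most `2d`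
around `u`; (iii) every vertex lies in at most `wcol_{2d}(G, ≤)` of the sets `F_u`. -/
theorem wreach_neighborhood_cover {V : Type} [Finite V] [LinearOrder V]
    (G : SimpleGraph V) (d k : ℕ) (hk : k = wcol G (2 * d))
    (F : V → Set V) (hF : ∀ u, F u = {v | u ∈ WReach G (2 * d) v}) :
    (∀ w : V, ∃ u : V, ball G d w ⊆ F u) ∧
    (∀ u : V, (G.induce (F u)).Connected ∧ ∃ hu : u ∈ F u, ∀ v, ∀ hv : v ∈ F u,
      ∃ p : (G.induce (F u)).Walk ⟨u, hu⟩ ⟨v, hv⟩, p.length ≤ 2 * d) ∧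
    (∀ v : V, Set.ncard {u | v ∈ F u} ≤ k) := by
  refine ⟨?_, ?_, ?_⟩
  · -- (i) covering of balls
    intro w
    have hne : (ball G d w).Nonempty := ⟨w, SimpleGraph.Walk.nil, by simp⟩
    obtain ⟨u, hu, hmin⟩ := Set.exists_min_image (ball G d w) id (Set.toFinite _) hne
    refine ⟨u, fun v hv => ?_⟩
    rw [hF]
    obtain ⟨p, hp⟩ := hv   -- p : Walk w v
    obtain ⟨q, hq⟩ := hu   -- q : Walk w u
    set r : G.Walk v u := p.reverse.append q with hr
    have hrlen : r.length ≤ 2 * d := by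
      rw [hr, SimpleGraph.Walk.length_append, SimpleGraph.Walk.length_reverse]
      omega
    have hmin' : ∀ x ∈ ball G d w, u ≤ x := fun x hx => hmin x hx
    have hsupp : ∀ x ∈ r.support, u ≤ x := by
      intro x hx
      rw [hr, SimpleGraph.Walk.mem_support_append_iff] at hx
      apply hmin'
      rcases hx with hx | hx
      · rw [SimpleGraph.Walk.support_reverse, List.mem_reverse] at hx
        exact ⟨p.takeUntil x hx, (p.length_takeUntil_le hx).trans hp⟩
      · exact ⟨q.takeUntil x hx, (q.length_takeUntil_le hx).trans hq⟩
    refine ⟨r.toPath, r.toPath.2, ?_, fun x hx => hsupp x (r.support_toPath_subset hx)⟩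
    exact (SimpleGraph.Walk.length_bypass_le r).trans hrlen
  · -- (ii) connectedness and radius
    intro u
    have hu : u ∈ F u := by
      rw [hF]
      exact ⟨SimpleGraph.Walk.nil, SimpleGraph.Walk.IsPath.nil, by simp, by simp⟩
    have key : ∀ v (hv : v ∈ F u),
        ∃ q : (G.induce (F u)).Walk ⟨u, hu⟩ ⟨v, hv⟩, q.length ≤ 2 * d := by
      intro v hv
      have hv' := hv
      rw [hF] at hv'
      obtain ⟨p, hpath, hlen, hord⟩ := hv'   -- p : Walk v u
      have hsub : ∀ x ∈ p.support, x ∈ F u := by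
        intro x hx
        rw [hF]
        rw [SimpleGraph.Walk.mem_support_iff_exists_append] at hx
        obtain ⟨q1, r1, rfl⟩ := hx
        refine ⟨r1, hpath.of_append_right, ?_, fun y hy => hord y ?_⟩
        · rw [SimpleGraph.Walk.length_append] at hlen; omega
        · rw [SimpleGraph.Walk.mem_support_append_iff]; exact Or.inr hy
      obtain ⟨q, hq⟩ := lift_walk G (F u) p.reverse
        (fun x hx => hsub x (by rwa [SimpleGraph.Walk.support_reverse, List.mem_reverse] at hx))
        hu hv
      exact ⟨q, by rw [hq, SimpleGraph.Walk.length_reverse]; exact hlen⟩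
    have hpre : (G.induce (F u)).Preconnected := by
      rintro ⟨a, haF⟩ ⟨b, hbF⟩
      obtain ⟨qa, _⟩ := key a haF
      obtain ⟨qb, _⟩ := key b hbF
      exact ⟨qa.reverse.append qb⟩
    have : Nonempty (F u) := ⟨⟨u, hu⟩⟩
    exact ⟨SimpleGraph.Connected.mk hpre, hu, key⟩
  · -- (iii) overlap bound
    intro v
    have hset : {u | v ∈ F u} = WReach G (2 * d) v := by
      ext u
      rw [Set.mem_setOf_eq, hF]
      rfl
    rw [hset, hk, wcol]
    exact le_ciSup (f := fun w : V => (WReach G (2 * d) w).ncard)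
      (Set.Finite.bddAbove (Set.finite_range _)) v
end

section
/- Let G be a finite simple graph, d ∈ ℕ a distance parameter, and ≤ a linear order on V(G) such that the crossing number of ≤ with respect to the family of radius-d balls { Ball_d[u] : u ∈ V(G) } is at most k. Then G admits a distance-d neighborhood cover of weak radius 2d and overlap at most k+1; that is, there is a family F of vertex subsets of G such that: (i) for every vertex u there is F ∈ F with Ball_d[u] ⊆ F; (ii) every F ∈ F satisfies F ⊆ Ball_{2d}[w] for some vertex w; and (iii) every vertex belongs to at most k+1 members of F. -/
/-- `x` and `y` are consecutive in the linear order on `V`. -/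
def ConsecPair {V : Type} [LinearOrder V] (x y : V) : Prop :=
  x < y ∧ ∀ z, ¬ (x < z ∧ z < y)

lemma mem_ball_self {V : Type} (G : SimpleGraph V) (d : ℕ) (u : V) : u ∈ ball G d u :=
  ⟨SimpleGraph.Walk.nil, by simp⟩

lemma ball_symm {V : Type} (G : SimpleGraph V) (d : ℕ) {u v : V} (h : v ∈ ball G d u) :
    u ∈ ball G d v := by
  obtain ⟨w, hw⟩ := h
  exact ⟨w.reverse, by simpa using hw⟩

lemma ball_trans {V : Type} (G : SimpleGraph V) {d₁ d₂ : ℕ} {u x y : V}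
    (h1 : x ∈ ball G d₁ u) (h2 : y ∈ ball G d₂ x) : y ∈ ball G (d₁ + d₂) u := by
  obtain ⟨w1, hw1⟩ := h1
  obtain ⟨w2, hw2⟩ := h2
  refine ⟨w1.append w2, ?_⟩
  rw [SimpleGraph.Walk.length_append]
  omega


/-- Combinatorial core: blocks `[h s, h (s+1))` partition `[0,n)`; no non-final block is
entirely contained in `B`. Then the number of blocks meeting `B` is at most the number of
"crossings" of `B` plus one. -/
lemma comb_core (n : ℕ) (h : ℕ → ℕ) (h0 : h 0 = 0) (hmono : ∀ s, h s < h (s+1))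
    (B : Set ℕ) (hBn : ∀ b ∈ B, b < n)
    (hstar : ∀ s, h (s+1) < n → ¬ (∀ t, h s ≤ t → t ≤ h (s+1) → t ∈ B)) :
    {s | h s < n ∧ ∃ t, h s ≤ t ∧ t < h (s+1) ∧ t ∈ B}.ncard ≤
      {i | i + 1 < n ∧ ¬ (i ∈ B ↔ i + 1 ∈ B)}.ncard + 1 := by
  classical
  set S := {s | h s < n ∧ ∃ t, h s ≤ t ∧ t < h (s+1) ∧ t ∈ B} with hS
  set C := {i | i + 1 < n ∧ ¬ (i ∈ B ↔ i + 1 ∈ B)} with hC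
  have hsm : StrictMono h := strictMono_nat_of_lt_succ hmono
  -- spanning blocks: contain an internal "left crossing"
  let Sp : ℕ → Prop := fun s => ∃ i, h s ≤ i ∧ i + 1 < h (s+1) ∧ i ∉ B ∧ i + 1 ∈ B
  have ex2 : ∀ s : ℕ, ∃ j, (h s + j + 1 ∉ B ∨ n ≤ h s + j + 1) := by
    intro s
    exact ⟨n, Or.inr (by omega)⟩
  let r : ℕ → ℕ := fun s => h s + Nat.find (ex2 s)
  have hrdef : ∀ s, r s = h s + Nat.find (ex2 s) := fun s => rfl
  let φ : ℕ → ℕ := fun s => if hs : Sp s then Nat.find hs else (if r s + 1 < n then r s else n)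
  have hφ_sp : ∀ s (hs : Sp s), φ s = Nat.find hs := fun s hs => dif_pos hs
  have hφ_cl : ∀ s, ¬ Sp s → φ s = if r s + 1 < n then r s else n := fun s hs => dif_neg hs
  -- facts about clean (non-spanning) meeting blocks
  have hc1 : ∀ s ∈ S, ¬ Sp s → h s ∈ B := by
    intro s hs hsp
    by_contra hB
    obtain ⟨-, t, ht1, ht2, ht3⟩ := hs
    have hq : ∃ t, h s ≤ t ∧ t < h (s+1) ∧ t ∈ B := ⟨t, ht1, ht2, ht3⟩
    set t₀ := Nat.find hq with ht₀
    obtain ⟨hq1, hq2, hq3⟩ := Nat.find_spec hq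
    have ht0ne : t₀ ≠ h s := fun he => hB (he ▸ hq3)
    have hlt : t₀ - 1 < t₀ := by omega
    have := Nat.find_min hq hlt
    have hnotB : t₀ - 1 ∉ B := by
      intro hmem
      exact this ⟨by omega, by omega, hmem⟩
    exact hsp ⟨t₀ - 1, by omega, by omega, hnotB, by
      have : t₀ - 1 + 1 = t₀ := by omega
      rw [this]; exact hq3⟩
  have hpre : ∀ s, h s ∈ B → ∀ j, j ≤ Nat.find (ex2 s) → h s + j ∈ B := by
    intro s hs j hj
    match j with
    | 0 => simpa using hs
    | j + 1 =>
      have hmin := Nat.find_min (ex2 s) (show j < Nat.find (ex2 s) by omega)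
      push_neg at hmin
      exact hmin.1
  have hrB : ∀ s ∈ S, ¬ Sp s → r s ∈ B := by
    intro s hs hsp
    rw [hrdef]
    exact hpre s (hc1 s hs hsp) _ le_rfl
  have hrexit : ∀ s, r s + 1 ∉ B ∨ n ≤ r s + 1 := fun s => Nat.find_spec (ex2 s)
  -- key: for a clean meeting block followed by another block inside [0,n), the run stops
  -- before the end of the block
  have hc5 : ∀ s ∈ S, ¬ Sp s → ∀ s', s < s' → h s' < n → r s < h (s+1) := by
    intro s hs hsp s' hss' hs'n
    by_contra hcon
    push_neg at hcon
    have h1n : h (s+1) < n := lt_of_le_of_lt (hsm.monotone (by omega : s + 1 ≤ s')) hs'n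
    apply hstar s h1n
    intro t ht1 ht2
    have hfind : h (s+1) ≤ h s + Nat.find (ex2 s) := by rw [← hrdef]; exact hcon
    have := hpre s (hc1 s hs hsp) (t - h s) (by omega)
    rwa [show h s + (t - h s) = t from by omega] at this
  -- the injection
  have hmaps : ∀ s ∈ S, φ s ∈ C ∪ {n} := by
    intro s hs
    by_cases hsp : Sp s
    · rw [hφ_sp s hsp]
      obtain ⟨hi1, hi2, hi3, hi4⟩ := Nat.find_spec hsp
      left
      exact ⟨hBn _ hi4, by tauto⟩
    · rw [hφ_cl s hsp]
      split
      · rename_i hrn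
        left
        refine ⟨hrn, ?_⟩
        have h1 := hrB s hs hsp
        have h2 := hrexit s
        rcases h2 with h2 | h2
        · tauto
        · omega
      · right; rfl
  have key : ∀ s ∈ S, ∀ s' ∈ S, s < s' → φ s ≠ φ s' := by
    intro s hs s' hs' hlt heq
    have hss' : h (s+1) ≤ h s' := hsm.monotone (by omega)
    have hs'n : h s' < n := hs'.1
    by_cases hsp : Sp s <;> by_cases hsp' : Sp s'
    · rw [hφ_sp s hsp, hφ_sp s' hsp'] at heq
      obtain ⟨hi1, hi2, hi3, hi4⟩ := Nat.find_spec hsp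
      obtain ⟨hj1, hj2, hj3, hj4⟩ := Nat.find_spec hsp'
      omega
    · rw [hφ_sp s hsp, hφ_cl s' hsp'] at heq
      obtain ⟨hi1, hi2, hi3, hi4⟩ := Nat.find_spec hsp
      have hi5 : Nat.find hsp + 1 < n := hBn _ hi4
      split at heq
      · exact hi3 (heq ▸ hrB s' hs' hsp')
      · omega
    · rw [hφ_cl s hsp, hφ_sp s' hsp'] at heq
      obtain ⟨hj1, hj2, hj3, hj4⟩ := Nat.find_spec hsp'
      have hj5 : Nat.find hsp' + 1 < n := hBn _ hj4
      split at heq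
      · exact hj3 (heq ▸ hrB s hs hsp)
      · omega
    · have hr1 : r s < h (s+1) := hc5 s hs hsp s' hlt hs'n
      have hr2 : h s' ≤ r s' := by rw [hrdef]; omega
      rw [hφ_cl s hsp, hφ_cl s' hsp'] at heq
      have hrs_small : r s + 1 < n := by omega
      rw [if_pos hrs_small] at heq
      split at heq <;> omega
  have hinj : Set.InjOn φ S := by
    intro s hs s' hs' heq
    by_contra hne
    rcases Ne.lt_or_gt hne with hl | hl
    · exact key s hs s' hs' hl heq
    · exact key s' hs' s hs hl heq.symm
  have hfin : (C ∪ {n} : Set ℕ).Finite := by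
    apply (Set.finite_Iio (n+1)).subset
    rintro x (hx | hx)
    · have h1 : x + 1 < n := hx.1
      simp only [Set.mem_Iio]
      omega
    · simp only [Set.mem_singleton_iff] at hx
      simp [hx]
  calc S.ncard ≤ (C ∪ {n} : Set ℕ).ncard := Set.ncard_le_ncard_of_injOn φ hmaps hinj hfin
    _ ≤ C.ncard + ({n} : Set ℕ).ncard := Set.ncard_union_le _ _
    _ = C.ncard + 1 := by rw [Set.ncard_singleton]

/-- If the crossing number of a linear order `≤` on `V(G)` with respect to the family of
radius-`d` balls is at most `k` (for every ball, at most `k` consecutive pairs have exactly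
one element in the ball), then `G` admits a distance-`d` neighborhood cover of weak radius
`2d` and overlap at most `k + 1`. -/
theorem cover_from_low_crossing {V : Type} [Finite V] [LinearOrder V]
    (G : SimpleGraph V) (d k : ℕ)
    (hcross : ∀ u : V, Set.ncard {p : V × V |
      ConsecPair p.1 p.2 ∧ Xor' (p.1 ∈ ball G d u) (p.2 ∈ ball G d u)} ≤ k) :
    ∃ F : Set (Set V),
      (∀ u : V, ∃ A ∈ F, ball G d u ⊆ A) ∧
      (∀ A ∈ F, ∃ w : V, A ⊆ ball G (2 * d) w) ∧
      (∀ v : V, Set.ncard {A | A ∈ F ∧ v ∈ A} ≤ k + 1) := by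
  classical
  rcases isEmpty_or_nonempty V with hemp | hne
  · exact ⟨∅, fun u => isEmptyElim u, fun A hA => absurd hA (Set.notMem_empty A),
      fun v => isEmptyElim v⟩
  have hinh : Inhabited V := Classical.inhabited_of_nonempty hne
  haveI := Fintype.ofFinite V
  set n := Fintype.card V with hn
  let e : Fin n ≃o V := monoEquivOfFin V rfl
  let g : ℕ → V := fun t => if ht : t < n then e ⟨t, ht⟩ else default
  have hgval : ∀ {t : ℕ} (ht : t < n), g t = e ⟨t, ht⟩ := by
    intro t ht; simp only [g, dif_pos ht]
  have hglt : ∀ {t t' : ℕ} (ht : t < n) (ht' : t' < n), (g t < g t' ↔ t < t') := by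
    intro t t' ht ht'
    rw [hgval ht, hgval ht']
    rw [OrderIso.lt_iff_lt]
    exact Fin.mk_lt_mk
  have hginj : ∀ {t t' : ℕ}, t < n → t' < n → g t = g t' → t = t' := by
    intro t t' ht ht' he
    rw [hgval ht, hgval ht'] at he
    have := e.injective he
    simpa using congrArg Fin.val this
  have hgsurj : ∀ x : V, ∃ t, t < n ∧ g t = x := by
    intro x
    refine ⟨(e.symm x).val, (e.symm x).isLt, ?_⟩
    rw [hgval (e.symm x).isLt]
    simp
  -- greedy blocks
  let Q : ℕ → ℕ → Prop := fun a b => a ≤ b ∧ b < n ∧ ∃ w, ∀ t, a ≤ t → t ≤ b → g t ∈ ball G d w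
  let endIdx : ℕ → ℕ := fun a => max a (Nat.findGreatest (Q a) n)
  have hendge : ∀ a, a ≤ endIdx a := fun a => le_max_left _ _
  have he1 : ∀ a, a < n → Q a (endIdx a) := by
    intro a ha
    have hPa : Q a a := ⟨le_rfl, ha, g a, fun t h1 h2 => by
      have : t = a := le_antisymm h2 h1
      rw [this]; exact mem_ball_self G d (g a)⟩
    have hfg : a ≤ Nat.findGreatest (Q a) n := Nat.le_findGreatest (le_of_lt ha) hPa
    have hme : endIdx a = Nat.findGreatest (Q a) n := max_eq_right hfg
    rw [hme]
    exact Nat.findGreatest_spec (le_of_lt ha) hPa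
  have he2 : ∀ a b, endIdx a < b → b < n → a ≤ b →
      ¬ (∃ w, ∀ t, a ≤ t → t ≤ b → g t ∈ ball G d w) := by
    intro a b hlt hbn hab hQ
    have hlt' : Nat.findGreatest (Q a) n < b := lt_of_le_of_lt (le_max_right a _) hlt
    exact Nat.findGreatest_is_greatest hlt' (le_of_lt hbn) ⟨hab, hbn, hQ⟩
  let heads : ℕ → ℕ := fun s =>
    Nat.rec (motive := fun _ => ℕ) 0 (fun _ ih => endIdx ih + 1) s
  have hh0 : heads 0 = 0 := rfl
  have hsucc : ∀ s, heads (s+1) = endIdx (heads s) + 1 := fun s => rfl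
  have hmono : ∀ s, heads s < heads (s+1) := by
    intro s
    have := hendge (heads s)
    have := hsucc s
    omega
  have hge : ∀ s, s ≤ heads s := by
    intro s
    induction s with
    | zero => omega
    | succ s ih => have := hmono s; omega
  -- clusters
  let A : ℕ → Set V := fun s => {x | ∃ t, heads s ≤ t ∧ t ≤ endIdx (heads s) ∧ x ∈ ball G d (g t)}
  let F : Set (Set V) := A '' {s | heads s < n}
  refine ⟨F, ?_, ?_, ?_⟩
  · -- coverage
    intro u
    obtain ⟨t, htn, hgt⟩ := hgsurj u
    have hex : ∃ s, t < heads (s+1) := ⟨t, by have := hge (t+1); omega⟩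
    set s := Nat.find hex with hsdef
    have hs2 : t < heads (s+1) := Nat.find_spec hex
    have hs1 : heads s ≤ t := by
      rcases Nat.eq_zero_or_pos s with h0 | hpos
      · rw [h0, hh0]; omega
      · obtain ⟨s', hseq⟩ : ∃ s', s = s' + 1 := ⟨s - 1, by omega⟩
        have hmin := Nat.find_min hex (m := s') (by rw [← hsdef]; omega)
        rw [← hseq] at hmin
        omega
    have hsn : heads s < n := lt_of_le_of_lt hs1 htn
    refine ⟨A s, ⟨s, hsn, rfl⟩, ?_⟩
    intro x hx
    refine ⟨t, hs1, ?_, by rwa [hgt]⟩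
    have := hsucc s
    omega
  · -- radius
    rintro A' ⟨s, hsn, rfl⟩
    obtain ⟨hle, hlt, w, hw⟩ := he1 (heads s) hsn
    refine ⟨w, ?_⟩
    rintro x ⟨t, h1, h2, h3⟩
    have hb : g t ∈ ball G d w := hw t h1 h2
    have := ball_trans G hb h3
    rwa [two_mul]
  · -- overlap
    intro v
    set Bidx : Set ℕ := {t | t < n ∧ g t ∈ ball G d v} with hBidx
    set S : Set ℕ := {s | heads s < n ∧ ∃ t, heads s ≤ t ∧ t < heads (s+1) ∧ t ∈ Bidx} with hSdef
    have hSsub : S ⊆ Set.Iio n := by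
      intro s hs
      exact lt_of_le_of_lt (hge s) hs.1
    have hSfin : S.Finite := (Set.finite_Iio n).subset hSsub
    have hsub : {A' | A' ∈ F ∧ v ∈ A'} ⊆ A '' S := by
      rintro A' ⟨⟨s, hsn, rfl⟩, hv⟩
      obtain ⟨t, h1, h2, h3⟩ := hv
      have htn : t < n := by
        have := (he1 (heads s) hsn).2.1
        omega
      refine ⟨s, ⟨hsn, t, h1, ?_, htn, ball_symm G d h3⟩, rfl⟩
      have := hsucc s
      omega
    have step1 : Set.ncard {A' | A' ∈ F ∧ v ∈ A'} ≤ S.ncard := by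
      calc Set.ncard {A' | A' ∈ F ∧ v ∈ A'} ≤ (A '' S).ncard :=
            Set.ncard_le_ncard hsub (hSfin.image A)
        _ ≤ S.ncard := Set.ncard_image_le hSfin
    have hstar : ∀ s, heads (s+1) < n → ¬ (∀ t, heads s ≤ t → t ≤ heads (s+1) → t ∈ Bidx) := by
      intro s h1n hall
      have hsn : heads s < n := lt_of_le_of_lt (le_of_lt (hmono s)) h1n
      have hEnd := hsucc s
      refine he2 (heads s) (heads (s+1)) (by omega) h1n (le_of_lt (hmono s)) ?_
      exact ⟨v, fun t ht1 ht2 => (hall t ht1 ht2).2⟩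
    have step2 := comb_core n heads hh0 hmono Bidx (fun b hb => hb.1) hstar
    rw [← hSdef] at step2
    -- crossings bound
    set Cidx : Set ℕ := {i | i + 1 < n ∧ ¬ (i ∈ Bidx ↔ i + 1 ∈ Bidx)} with hCdef
    have step3 : Cidx.ncard ≤ k := by
      have hmaps : ∀ i ∈ Cidx, (g i, g (i+1)) ∈ {p : V × V |
          ConsecPair p.1 p.2 ∧ Xor' (p.1 ∈ ball G d v) (p.2 ∈ ball G d v)} := by
        intro i hi
        obtain ⟨hin, hx⟩ := hi
        have hi1 : i < n := by omega
        constructor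
        · constructor
          · exact (hglt hi1 hin).2 (by omega)
          · rintro z ⟨hz1, hz2⟩
            obtain ⟨t', ht', rfl⟩ := hgsurj z
            have := (hglt hi1 ht').1 hz1
            have := (hglt ht' hin).1 hz2
            omega
        · have hiff : (i ∈ Bidx ↔ g i ∈ ball G d v) := by
            constructor
            · exact fun h => h.2
            · exact fun h => ⟨hi1, h⟩
          have hiff' : (i + 1 ∈ Bidx ↔ g (i+1) ∈ ball G d v) := by
            constructor
            · exact fun h => h.2
            · exact fun h => ⟨hin, h⟩
          rw [Xor']
          tauto
      have hinj : Set.InjOn (fun i => (g i, g (i+1))) Cidx := by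
        intro i hi i' hi' he
        have hi1 : i + 1 < n := hi.1
        have hi1' : i' + 1 < n := hi'.1
        have h1 : g i = g i' := congrArg Prod.fst he
        exact hginj (by omega) (by omega) h1
      exact le_trans
        (Set.ncard_le_ncard_of_injOn _ hmaps hinj (Set.toFinite _))
        (hcross v)
    omega
end

section
/- Let G, G', H be finite simple graphs and h, d ∈ ℕ. If G' is a depth-h minor of G and H is a depth-d minor of G', then H is a depth-(2hd + h + d) minor of G. -/
/-- A minor model of `H` in `G`: pairwise disjoint connected branch sets `bs u ⊆ V(G)`,
one for each vertex `u` of `H`, such that every edge of `H` is witnessed by an edge of `G`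
between the corresponding branch sets. -/
structure MinorModel {W V : Type} (H : SimpleGraph W) (G : SimpleGraph V) where
  bs : W → Set V
  connected : ∀ u : W, (G.induce (bs u)).Connected
  disjoint : ∀ u v : W, u ≠ v → Disjoint (bs u) (bs v)
  edge : ∀ u v : W, H.Adj u v → ∃ a ∈ bs u, ∃ b ∈ bs v, G.Adj a b

/-- The set `s` has radius at most `r` in `G[s]`: some `c ∈ s` is joined inside `G[s]` to
every vertex of `s` by a walk of length at most `r`. -/
def RadiusLE {V : Type} (G : SimpleGraph V) (s : Set V) (r : ℕ) : Prop :=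
  ∃ c : V, ∃ hc : c ∈ s, ∀ x : V, ∀ hx : x ∈ s,
    ∃ w : (G.induce s).Walk ⟨c, hc⟩ ⟨x, hx⟩, w.length ≤ r

/-- `H` is a depth-`r` minor of `G`: there is a minor model of `H` in `G` all of whose
branch sets have radius at most `r`. -/
def IsDepthMinor {W V : Type} (H : SimpleGraph W) (G : SimpleGraph V) (r : ℕ) : Prop :=
  ∃ M : MinorModel H G, ∀ u : W, RadiusLE G (M.bs u) r

/-!
Compose the two models: the new branch set of `u` is the union of the `G`-branch sets of the
vertices in the `G'`-branch set of `u`. A walk of length at most `d` in `G'` from the centre of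
that set lifts to `G`, each of its edges being replaced by at most `h` steps from a centre to the
end of an edge between branch sets, that edge, and at most `h` steps to the next centre. This gives
radius at most `h + d (2h + 1)`.
-/

namespace SimpleGraph

variable {V V' : Type*} {G : SimpleGraph V} {G' : SimpleGraph V'}

lemma edist_le_coe_iff {u v : V} {n : ℕ} :
    G.edist u v ≤ n ↔ ∃ p : G.Walk u v, p.length ≤ n := by
  refine ⟨fun huv => ?_, fun ⟨p, hp⟩ => (edist_le p).trans (by exact_mod_cast hp)⟩
  obtain ⟨p, hp⟩ := exists_walk_of_edist_ne_top (ne_top_of_le_ne_top (ENat.natCast_ne_top n) huv)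
  exact ⟨p, by exact_mod_cast hp ▸ huv⟩

lemma Hom.edist_le (f : G →g G') (u v : V) : G'.edist (f u) (f v) ≤ G.edist u v := by
  by_cases huv : G.Reachable u v
  · obtain ⟨p, hp⟩ := huv.exists_walk_length_eq_edist
    rw [← hp, ← p.length_map f]
    exact (p.map f).edist_le
  · rw [edist_eq_top_of_not_reachable huv]
    exact le_top

lemma edist_inclusion_le {s t : Set V} (hst : s ⊆ t) (x y : s) :
    (G.induce t).edist (Set.inclusion hst x) (Set.inclusion hst y) ≤ (G.induce s).edist x y :=
  (G.induceHomOfLE hst).toHom.edist_le x y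

end SimpleGraph

open SimpleGraph

section

variable {V V' : Type} {G : SimpleGraph V} {G' : SimpleGraph V'}

lemma radiusLE_iff_edist {s : Set V} {r : ℕ} :
    RadiusLE G s r ↔ ∃ c : s, ∀ x : s, (G.induce s).edist c x ≤ r := by
  simp only [RadiusLE, edist_le_coe_iff, Subtype.forall, Subtype.exists]

lemma RadiusLE.induce_connected {s : Set V} {r : ℕ} (hs : RadiusLE G s r) :
    (G.induce s).Connected := by
  obtain ⟨c, hc, hwalk⟩ := hs
  have : Nonempty s := ⟨⟨c, hc⟩⟩
  refine ⟨fun x y => ?_⟩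
  obtain ⟨p, -⟩ := hwalk x x.2
  obtain ⟨q, -⟩ := hwalk y y.2
  exact ⟨p.reverse.append q⟩

namespace MinorModel

def liftSet (M : MinorModel G' G) (S : Set V') : Set V := ⋃ a ∈ S, M.bs a

variable (M : MinorModel G' G)

lemma bs_subset_liftSet {S : Set V'} {a : V'} (ha : a ∈ S) : M.bs a ⊆ M.liftSet S :=
  Set.subset_biUnion_of_mem ha

lemma disjoint_liftSet {S T : Set V'} (hST : Disjoint S T) :
    Disjoint (M.liftSet S) (M.liftSet T) := by
  simp only [liftSet, Set.disjoint_iUnion_left, Set.disjoint_iUnion_right]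
  intro b hb a ha
  exact M.disjoint a b (hST.ne_of_mem ha hb)

lemma exists_adj_liftSet {S T : Set V'} (hST : ∃ a ∈ S, ∃ b ∈ T, G'.Adj a b) :
    ∃ x ∈ M.liftSet S, ∃ y ∈ M.liftSet T, G.Adj x y := by
  obtain ⟨a, ha, b, hb, hab⟩ := hST
  obtain ⟨x, hx, y, hy, hxy⟩ := M.edge a b hab
  exact ⟨x, M.bs_subset_liftSet ha hx, y, M.bs_subset_liftSet hb hy, hxy⟩

lemma edist_liftSet_le {h : ℕ} (c : ∀ a, M.bs a)
    (hc : ∀ a (x : M.bs a), (G.induce (M.bs a)).edist (c a) x ≤ h) {S : Set V'} {a b : S}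
    (p : (G'.induce S).Walk a b) (x : M.bs b) :
    (G.induce (M.liftSet S)).edist (Set.inclusion (M.bs_subset_liftSet a.2) (c a))
      (Set.inclusion (M.bs_subset_liftSet b.2) x) ≤ ↑(h + p.length * (2 * h + 1)) := by
  induction p with
  | nil => exact (edist_inclusion_le _ _ _).trans (by simpa using hc _ x)
  | @cons a a' b hadj p ih =>
    obtain ⟨y, hy, z, hz, hyz⟩ := M.edge a a' hadj
    have hcy := (edist_inclusion_le (M.bs_subset_liftSet a.2) (c a) ⟨y, hy⟩).trans (hc a ⟨y, hy⟩)
    have hzc := (edist_inclusion_le (M.bs_subset_liftSet a'.2) ⟨z, hz⟩ (c a')).trans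
      (SimpleGraph.edist_comm.trans_le (hc a' ⟨z, hz⟩))
    have hyz' : (G.induce (M.liftSet S)).edist ⟨y, M.bs_subset_liftSet a.2 hy⟩
        ⟨z, M.bs_subset_liftSet a'.2 hz⟩ ≤ 1 :=
      edist_le_one_iff_adj_or_eq.mpr (.inl hyz)
    -- route `c a → y → z → c a' → x`
    calc _ ≤ _ := SimpleGraph.edist_triangle
      _ ≤ _ := add_le_add SimpleGraph.edist_triangle (ih x)
      _ ≤ _ := add_le_add (add_le_add SimpleGraph.edist_triangle hzc) le_rfl
      _ ≤ _ := add_le_add (add_le_add (add_le_add hcy hyz') le_rfl) le_rfl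
      _ = ↑(h + (p.cons hadj).length * (2 * h + 1)) := by push_cast [Walk.length_cons]; ring

lemma radiusLE_liftSet {h d : ℕ} (hM : ∀ a, RadiusLE G (M.bs a) h) {S : Set V'}
    (hS : RadiusLE G' S d) : RadiusLE G (M.liftSet S) (2 * h * d + h + d) := by
  choose c hc using fun a => radiusLE_iff_edist.mp (hM a)
  obtain ⟨a₀, ha₀, hwalk⟩ := hS
  refine radiusLE_iff_edist.mpr ⟨Set.inclusion (M.bs_subset_liftSet ha₀) (c a₀), ?_⟩
  rintro ⟨x, hx⟩
  obtain ⟨b, hb, hxb⟩ := Set.mem_iUnion₂.mp hx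
  obtain ⟨p, hp⟩ := hwalk b hb
  calc _ ≤ ((h + p.length * (2 * h + 1) : ℕ) : ℕ∞) := M.edist_liftSet_le c hc p ⟨x, hxb⟩
    _ ≤ ((2 * h * d + h + d : ℕ) : ℕ∞) := Nat.cast_le.mpr (by nlinarith)

end MinorModel

end

theorem depthMinor_trans_general {V V' W : Type}
    (G : SimpleGraph V) (G' : SimpleGraph V') (H : SimpleGraph W) (h d : ℕ)
    (h1 : IsDepthMinor G' G h) (h2 : IsDepthMinor H G' d) :
    IsDepthMinor H G (2 * h * d + h + d) := by
  obtain ⟨M, hM⟩ := h1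
  obtain ⟨N, hN⟩ := h2
  have hrad u : RadiusLE G (M.liftSet (N.bs u)) (2 * h * d + h + d) :=
    M.radiusLE_liftSet hM (hN u)
  exact ⟨{ bs := fun u => M.liftSet (N.bs u)
           connected := fun u => (hrad u).induce_connected
           disjoint := fun u v huv => M.disjoint_liftSet (N.disjoint u v huv)
           edge := fun u v huv => M.exists_adj_liftSet (N.edge u v huv) }, hrad⟩

/-- If `G'` is a depth-`h` minor of `G` and `H` is a depth-`d` minor of `G'`, then `H` is a
depth-`(2hd + h + d)` minor of `G`. -/
theorem depthMinor_trans {V V' W : Type} [Finite V] [Finite V'] [Finite W]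
    (G : SimpleGraph V) (G' : SimpleGraph V') (H : SimpleGraph W) (h d : ℕ)
    (h1 : IsDepthMinor G' G h) (h2 : IsDepthMinor H G' d) :
    IsDepthMinor H G (2 * h * d + h + d) :=
  depthMinor_trans_general G G' H h d h1 h2
end

section
/- The class of rook graphs transduces the class of all graphs: there exists a transduction T (a finite set of colors together with a first-order formula φ(x,y) over the signature of colored graphs) such that every finite simple graph belongs to T(R) for some rook graph R. -/
open FirstOrder

/-- Relation symbols of the language of graphs extended with `k` colors (unary predicates):
one binary adjacency relation and `k` unary color predicates. -/
inductive ColorRel (k : ℕ) : ℕ → Type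
  | adj : ColorRel k 2
  | color : Fin k → ColorRel k 1

/-- The language of `k`-colored graphs. -/
def cgLang (k : ℕ) : Language :=
  ⟨fun _ => Empty, ColorRel k⟩

/-- The `k`-colored graph structure on `V` obtained from a graph `G` and colors `c`. -/
def cgStructure {V : Type} (k : ℕ) (G : SimpleGraph V) (c : Fin k → Set V) :
    (cgLang k).Structure V where
  funMap := fun f _ => f.elim
  RelMap := fun r x =>
    match r with
    | ColorRel.adj => G.Adj (x 0) (x 1)
    | ColorRel.color i => x 0 ∈ c i

/-- A transduction: a finite set of colors (here of size `k`) together with a first-order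
formula `φ(x,y)` over the language of `k`-colored graphs. -/
structure Transduction where
  k : ℕ
  φ : (cgLang k).Formula (Fin 2)

/-- `H ∈ T(G)`: there is a coloring `c` of `G` such that `H` is (isomorphic to) an induced
subgraph of the graph interpreted in the colored graph `(G, c)` by the formula `T.φ`,
i.e. the graph on `V(G)` where distinct `u,v` are adjacent iff `φ(u,v)` or `φ(v,u)` holds. -/
def Transduction.mem {V W : Type} (T : Transduction) (G : SimpleGraph V)
    (H : SimpleGraph W) : Prop :=
  ∃ c : Fin T.k → Set V,
    Nonempty (H ↪g SimpleGraph.fromRel (fun u v : V =>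
      letI := cgStructure T.k G c; T.φ.Realize ![u, v]))


/-!
Number the vertices of `G` by `Fin n` and put vertex `p` at cell `(p, 0)` of a rook graph, marked
with color `0`; give every edge `ij` a private column, in which the cell of row `i` gets color `1`
and the cell of row `j` color `2`. For distinct vertices `x, y` the formula asks for a path `x - z - w - y` with
`z` of color `1` and `w` of color `2`. Being off column `0`, `z` lies in the row of `x` and `w` in
the row of `y`; these rows differ, so `z` and `w` share a column, which can only be the column of
the edge `xy`.
-/

open Language SimpleGraph

namespace Transduction

theorem mem.of_embedding {V W W' : Type} {T : Transduction} {G : SimpleGraph V}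
    {H : SimpleGraph W} {H' : SimpleGraph W'} (h : T.mem G H) (f : H' ↪g H) : T.mem G H' :=
  let ⟨c, ⟨g⟩⟩ := h; ⟨c, ⟨f.trans g⟩⟩

end Transduction

section ColoredGraph

variable {V : Type} {k n : ℕ} (G : SimpleGraph V) (c : Fin k → Set V)

def colorAtom (i : Fin k) (t : (cgLang k).Term (Fin 2 ⊕ Fin n)) :
    (cgLang k).BoundedFormula (Fin 2) n :=
  Relations.boundedFormula₁ (L := cgLang k) (ColorRel.color i) t

def adjAtom (t₁ t₂ : (cgLang k).Term (Fin 2 ⊕ Fin n)) : (cgLang k).BoundedFormula (Fin 2) n :=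
  Relations.boundedFormula₂ (L := cgLang k) ColorRel.adj t₁ t₂

@[simp]
theorem realize_colorAtom (i : Fin k) (t : (cgLang k).Term (Fin 2 ⊕ Fin n)) (v : Fin 2 → V)
    (xs : Fin n → V) :
    (letI := cgStructure k G c; (colorAtom i t).Realize v xs) ↔
      (letI := cgStructure k G c; t.realize (Sum.elim v xs)) ∈ c i :=
  Iff.rfl

@[simp]
theorem realize_adjAtom (t₁ t₂ : (cgLang k).Term (Fin 2 ⊕ Fin n)) (v : Fin 2 → V)
    (xs : Fin n → V) :
    (letI := cgStructure k G c; (adjAtom t₁ t₂).Realize v xs) ↔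
      G.Adj (letI := cgStructure k G c; t₁.realize (Sum.elim v xs))
        (letI := cgStructure k G c; t₂.realize (Sum.elim v xs)) :=
  Iff.rfl

end ColoredGraph

def rookEdgeFormula : (cgLang 3).Formula (Fin 2) :=
  let x {n} : (cgLang 3).Term (Fin 2 ⊕ Fin n) := Term.var (Sum.inl 0)
  let y {n} : (cgLang 3).Term (Fin 2 ⊕ Fin n) := Term.var (Sum.inl 1)
  colorAtom 0 x ⊓ colorAtom 0 y ⊓
    (colorAtom 1 &0 ⊓ colorAtom 2 &1 ⊓ adjAtom x &0 ⊓ adjAtom y &1 ⊓ adjAtom &0 &1).ex.ex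

theorem realize_rookEdgeFormula {V : Type} (G : SimpleGraph V) (c : Fin 3 → Set V) (x y : V) :
    (letI := cgStructure 3 G c; rookEdgeFormula.Realize ![x, y]) ↔
      x ∈ c 0 ∧ y ∈ c 0 ∧
        ∃ z ∈ c 1, ∃ w ∈ c 2, G.Adj x z ∧ G.Adj y w ∧ G.Adj z w := by
  simp [rookEdgeFormula, Formula.Realize, Fin.snoc, and_assoc]

section Rook

variable {a b : ℕ} {u v : Fin a × Fin b}

theorem rookGraph_adj : (rookGraph a b).Adj u v ↔ u ≠ v ∧ (u.1 = v.1 ∨ u.2 = v.2) := by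
  simp only [rookGraph, fromRel_adj, eq_comm (a := v.1), eq_comm (a := v.2), or_self]

theorem rookGraph_adj_iff_fst_eq (h : u.2 ≠ v.2) : (rookGraph a b).Adj u v ↔ u.1 = v.1 := by
  grind [rookGraph_adj]

theorem rookGraph_adj_iff_snd_eq (h : u.1 ≠ v.1) : (rookGraph a b).Adj u v ↔ u.2 = v.2 := by
  grind [rookGraph_adj]

end Rook

section Encoding

variable {n : ℕ}

def edgeColumn (i j : Fin n) : Fin (n * n + 1) :=
  (finProdFinEquiv (i, j)).succ

theorem edgeColumn_ne_zero (i j : Fin n) : edgeColumn i j ≠ 0 :=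
  Fin.succ_ne_zero _

theorem edgeColumn_inj {i j i' j' : Fin n} :
    edgeColumn i j = edgeColumn i' j' ↔ i = i' ∧ j = j' := by
  simp [edgeColumn]

def rookColoring (G : SimpleGraph (Fin n)) : Fin 3 → Set (Fin n × Fin (n * n + 1)) :=
  ![{v | v.2 = 0},
    {v | ∃ i j, G.Adj i j ∧ v = (i, edgeColumn i j)},
    {v | ∃ i j, G.Adj i j ∧ v = (j, edgeColumn i j)}]

theorem realize_rookEdgeFormula_rookColoring (G : SimpleGraph (Fin n)) {p q : Fin n}
    (hpq : p ≠ q) :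
    (letI := cgStructure 3 (rookGraph n (n * n + 1)) (rookColoring G);
      rookEdgeFormula.Realize ![((p, 0) : Fin n × Fin (n * n + 1)), (q, 0)]) ↔ G.Adj p q := by
  rw [realize_rookEdgeFormula]
  constructor
  · rintro ⟨-, -, _, ⟨i, j, hij, rfl⟩, _, ⟨i', j', -, rfl⟩, hz, hw, hzw⟩
    obtain rfl : p = i := (rookGraph_adj_iff_fst_eq (edgeColumn_ne_zero i j).symm).1 hz
    obtain rfl : q = j' := (rookGraph_adj_iff_fst_eq (edgeColumn_ne_zero i' j').symm).1 hw
    obtain ⟨-, rfl⟩ := edgeColumn_inj.1 ((rookGraph_adj_iff_snd_eq hpq).1 hzw)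
    exact hij
  · intro h
    refine ⟨rfl, rfl, _, ⟨p, q, h, rfl⟩, _, ⟨p, q, h, rfl⟩, ?_, ?_, ?_⟩
    · exact (rookGraph_adj_iff_fst_eq (edgeColumn_ne_zero p q).symm).2 rfl
    · exact (rookGraph_adj_iff_fst_eq (edgeColumn_ne_zero p q).symm).2 rfl
    · exact (rookGraph_adj_iff_snd_eq hpq).2 rfl

end Encoding

theorem rookEdgeFormula_transduction_mem {n : ℕ} (G : SimpleGraph (Fin n)) :
    Transduction.mem ⟨3, rookEdgeFormula⟩ (rookGraph n (n * n + 1)) G := by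
  refine ⟨rookColoring G, ⟨⟨Function.Embedding.sectL (Fin n) 0, fun {p q} => ?_⟩⟩⟩
  dsimp only
  simp only [Function.Embedding.sectL_apply, fromRel_adj, ne_eq, Prod.mk.injEq, and_true]
  by_cases hpq : p = q
  · simp [hpq]
  · rw [realize_rookEdgeFormula_rookColoring G hpq,
      realize_rookEdgeFormula_rookColoring G (Ne.symm hpq), G.adj_comm q p, or_self]
    exact and_iff_right hpq

/-- The class of rook graphs transduces the class of all graphs: there is a single
transduction `T` such that every finite simple graph belongs to `T(R)` for some rook graph. -/
theorem rook_transduces_all_graphs :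
    ∃ T : Transduction, ∀ (V : Type) [Fintype V] (G : SimpleGraph V),
      ∃ a b : ℕ, T.mem (rookGraph a b) G := by
  refine ⟨⟨3, rookEdgeFormula⟩, fun V _ G => ?_⟩
  let e := Fintype.equivFin V
  exact ⟨_, _, (rookEdgeFormula_transduction_mem (G.map e.toEmbedding)).of_embedding
    (Iso.map e G).toEmbedding⟩
end
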